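/- arXiv:2201.04372 — 9 statements merged into one kernel-verified Lean document; each statement's English description precedes it below -/
import Mathlib

section
/- Let p be a prime, k ≥ 1 an integer, and u a p-adic unit. Then u is a p^k-th power in Z_p if and only if u is a p^k-th power residue modulo p^(k+v_p(2)+1), where v_p(2) = 1 if p = 2 and 0 otherwise. -/
open PadicInt

private lemma aux_dvd_iff_norm {p : ℕ} [Fact p.Prime] (x : ℤ_[p]) (n : ℕ) :
    (p : ℤ_[p]) ^ n ∣ x ↔ ‖x‖ ≤ (p : ℝ) ^ (-(n : ℤ)) := by
  rw [PadicInt.norm_le_pow_iff_mem_span_pow, Ideal.mem_span_singleton]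

private lemma aux_norm_add_eq {p : ℕ} [Fact p.Prime] {x y : ℤ_[p]} (h : ‖y‖ < ‖x‖) :
    ‖x + y‖ = ‖x‖ := by
  rw [PadicInt.norm_add_eq_max_of_ne (ne_of_gt h), max_eq_left h.le]

private lemma aux_step {p : ℕ} [hp : Fact p.Prime] (m : ℕ) (hm2 : 2 ≤ m)
    (hm3 : p = 2 → 3 ≤ m) (b u : ℤ_[p]) (hb : IsUnit b)
    (h : (p : ℤ_[p]) ^ m ∣ u - b ^ p) :
    ∃ w : ℤ_[p], w ^ p = u ∧ (p : ℤ_[p]) ^ (m - 1) ∣ w - b := by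
  have hp2 : 2 ≤ p := hp.out.two_le
  have hpR0 : (0 : ℝ) < p := by exact_mod_cast hp.out.pos
  have hpR1 : (1 : ℝ) < p := by exact_mod_cast hp.out.one_lt
  obtain ⟨c0, hc0⟩ := h
  set binv : ℤ_[p] := ↑hb.unit⁻¹ with hbinv_def
  have hbbinv : b * binv = 1 := by
    rw [hbinv_def]
    exact_mod_cast hb.unit.mul_inv
  set t : ℤ_[p] := (p : ℤ_[p]) ^ (m - 1) * c0 * binv ^ (p - 1) with ht_def
  have ht_dvd : (p : ℤ_[p]) ^ (m - 1) ∣ t := ⟨c0 * binv ^ (p - 1), by rw [ht_def]; ring⟩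
  have hbt : (p : ℤ_[p]) * b ^ (p - 1) * t = u - b ^ p := by
    have h1 : (p : ℤ_[p]) * (p : ℤ_[p]) ^ (m - 1) = (p : ℤ_[p]) ^ m := by
      rw [← pow_succ']
      congr 1
      omega
    calc (p : ℤ_[p]) * b ^ (p - 1) * t
        = ((p : ℤ_[p]) * (p : ℤ_[p]) ^ (m - 1)) * c0 * (b * binv) ^ (p - 1) := by
          rw [ht_def, mul_pow]; ring
      _ = u - b ^ p := by rw [h1, hbbinv, one_pow, mul_one, hc0]
  -- expansion of (b + t)^p
  have hexp : (b + t) ^ p = b ^ p + t ^ p + (p : ℤ_[p]) * ∑ k ∈ Finset.Ioo 0 p,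
      b ^ k * t ^ (p - k) * ((p.choose k / p : ℕ) : ℤ_[p]) := by
    rw [add_pow_prime_eq hp.out b t]
    congr 1
    rw [mul_assoc, mul_assoc, Finset.mul_sum, Finset.mul_sum]
    congr 1
    refine Finset.sum_congr rfl fun x hx => ?_
    rw [Finset.mem_Ioo] at hx
    obtain ⟨i, rfl⟩ : ∃ i, x = i + 1 := ⟨x - 1, by omega⟩
    obtain ⟨j, hj⟩ : ∃ j, p - (i + 1) = j + 1 := ⟨p - (i + 1) - 1, by omega⟩
    rw [hj, Nat.add_sub_cancel, Nat.add_sub_cancel]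
    ring
  have hIoo : Finset.Ioo 0 p = insert (p - 1) (Finset.Ioo 0 (p - 1)) := by
    ext x
    simp only [Finset.mem_Ioo, Finset.mem_insert]
    omega
  have hnotmem : p - 1 ∉ Finset.Ioo 0 (p - 1) := by simp
  have hch : ((p.choose (p - 1) / p : ℕ) : ℤ_[p]) = 1 := by
    have h1 : p.choose (p - 1) = p := by
      have := Nat.choose_symm (show 1 ≤ p by omega) (n := p)
      rw [this, Nat.choose_one_right]
    rw [h1, Nat.div_self hp.out.pos, Nat.cast_one]
  have hexp1 : p - (p - 1) = 1 := by omega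
  rw [hIoo, Finset.sum_insert hnotmem, hexp1, hch] at hexp
  obtain ⟨s, hs⟩ : t ^ 2 ∣ ∑ k ∈ Finset.Ioo 0 (p - 1),
      b ^ k * t ^ (p - k) * ((p.choose k / p : ℕ) : ℤ_[p]) := by
    refine Finset.dvd_sum fun k hk => ?_
    rw [Finset.mem_Ioo] at hk
    exact ((pow_dvd_pow t (by omega)).mul_left _).mul_right _
  rw [hs] at hexp
  have key : u - (b + t) ^ p = -(t ^ p + (p : ℤ_[p]) * (t ^ 2 * s)) := by
    rw [hexp]
    linear_combination (-1 : ℤ_[p]) * hbt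
  -- divisibility of u - (b+t)^p by p^(m+1)
  have h_tp : (p : ℤ_[p]) ^ (m + 1) ∣ t ^ p := by
    have h1 : (p : ℤ_[p]) ^ ((m - 1) * p) ∣ t ^ p := by
      rw [pow_mul]
      exact pow_dvd_pow_of_dvd ht_dvd p
    refine dvd_trans (pow_dvd_pow _ ?_) h1
    by_cases hpp : p = 2
    · have := hm3 hpp
      subst hpp
      omega
    · have h3 : 3 ≤ p := by omega
      have := Nat.mul_le_mul_left (m - 1) h3
      omega
  have h_pt2 : (p : ℤ_[p]) ^ (m + 1) ∣ (p : ℤ_[p]) * (t ^ 2 * s) := by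
    have h1 : (p : ℤ_[p]) ^ (1 + (m - 1) * 2) ∣ (p : ℤ_[p]) * t ^ 2 := by
      rw [pow_add, pow_one, pow_mul]
      exact mul_dvd_mul dvd_rfl (pow_dvd_pow_of_dvd ht_dvd 2)
    have h2 : (p : ℤ_[p]) ^ (m + 1) ∣ (p : ℤ_[p]) * t ^ 2 :=
      dvd_trans (pow_dvd_pow _ (by omega)) h1
    rw [← mul_assoc]
    exact h2.mul_right s
  have hU : (p : ℤ_[p]) ^ (m + 1) ∣ u - (b + t) ^ p := by
    rw [key]
    exact (dvd_add h_tp h_pt2).neg_right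
  -- norms
  have ht1 : ‖t‖ < 1 := (PadicInt.norm_lt_one_iff_dvd t).mpr
    (dvd_trans (dvd_pow_self (p : ℤ_[p]) (by omega : m - 1 ≠ 0)) ht_dvd)
  have hbnorm : ‖b‖ = 1 := PadicInt.isUnit_iff.mp hb
  have hb'norm : ‖b + t‖ = 1 := by
    rw [aux_norm_add_eq (by rw [hbnorm]; exact ht1), hbnorm]
  have hnormU : ‖u - (b + t) ^ p‖ ≤ (p : ℝ) ^ (-((m + 1 : ℕ) : ℤ)) :=
    (aux_dvd_iff_norm _ _).mp hU
  -- Hensel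
  set F : Polynomial ℤ_[p] := Polynomial.X ^ p - Polynomial.C u with hF_def
  have hFeval : ∀ z : ℤ_[p], F.eval z = z ^ p - u := by
    intro z; simp [hF_def]
  have hFderiv : ∀ x : ℤ_[p], (Polynomial.derivative F).eval x = p * x ^ (p - 1) := by
    intro x
    simp [hF_def, Polynomial.derivative_X_pow]
  have hFd : ‖(Polynomial.derivative F).eval (b + t)‖ = (p : ℝ)⁻¹ := by
    rw [hFderiv, norm_mul, PadicInt.norm_p, norm_pow, hb'norm, one_pow, mul_one]
  have hnorm : ‖F.eval (b + t)‖ < ‖(Polynomial.derivative F).eval (b + t)‖ ^ 2 := by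
    rw [hFd, hFeval]
    have h1 : ‖(b + t) ^ p - u‖ = ‖u - (b + t) ^ p‖ := by rw [← norm_neg]; congr 1; ring
    rw [h1]
    calc ‖u - (b + t) ^ p‖ ≤ (p : ℝ) ^ (-((m + 1 : ℕ) : ℤ)) := hnormU
      _ < (p : ℝ) ^ (-2 : ℤ) := by
          apply zpow_lt_zpow_right₀ hpR1
          omega
      _ = (p : ℝ)⁻¹ ^ 2 := by
          rw [← zpow_neg_one, ← zpow_natCast ((p:ℝ) ^ (-1:ℤ)) 2, ← zpow_mul]
          norm_num
  obtain ⟨z, hz_eval, hz_dist, -, -⟩ := hensels_lemma hnorm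
  have hzp : z ^ p = u := by
    rw [Polynomial.coe_aeval_eq_eval] at hz_eval
    have := hFeval z ▸ hz_eval
    exact sub_eq_zero.mp this
  rw [Polynomial.coe_aeval_eq_eval, hFd] at hz_dist
  have hz2 : (p : ℤ_[p]) ^ 2 ∣ z - (b + t) := by
    rw [aux_dvd_iff_norm]
    have : ‖z - (b + t)‖ < (p : ℝ) ^ (-1 : ℤ) := by rwa [zpow_neg_one]
    have h2 := (PadicInt.norm_lt_pow_iff_norm_le_pow_sub_one (z - (b + t)) (-1)).mp this
    norm_num at h2 ⊢
    exact h2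
  -- geometric sum argument
  set S : ℤ_[p] := ∑ i ∈ Finset.range p, z ^ i * (b + t) ^ (p - 1 - i) with hS_def
  have hfac : S * (z - (b + t)) = z ^ p - (b + t) ^ p := geom_sum₂_mul z (b + t) p
  have hSsub : S - (p : ℤ_[p]) * (b + t) ^ (p - 1)
      = ∑ i ∈ Finset.range p, (z ^ i - (b + t) ^ i) * (b + t) ^ (p - 1 - i) := by
    have h1 : (p : ℤ_[p]) * (b + t) ^ (p - 1)
        = ∑ i ∈ Finset.range p, (b + t) ^ i * (b + t) ^ (p - 1 - i) := by
      have h2 : ∀ i ∈ Finset.range p, (b + t) ^ i * (b + t) ^ (p - 1 - i)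
          = (b + t) ^ (p - 1) := by
        intro i hi
        rw [← pow_add]
        congr 1
        have := Finset.mem_range.mp hi
        omega
      rw [Finset.sum_congr rfl h2, Finset.sum_const, Finset.card_range, nsmul_eq_mul]
    rw [hS_def, h1, ← Finset.sum_sub_distrib]
    exact Finset.sum_congr rfl fun i _ => by ring
  have hSd : (p : ℤ_[p]) ^ 2 ∣ S - (p : ℤ_[p]) * (b + t) ^ (p - 1) := by
    rw [hSsub]
    exact Finset.dvd_sum fun i _ =>
      (dvd_trans hz2 (sub_dvd_pow_sub_pow z (b + t) i)).mul_right _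
  have hSsubnorm : ‖S - (p : ℤ_[p]) * (b + t) ^ (p - 1)‖ ≤ (p : ℝ) ^ (-2 : ℤ) := by
    have := (aux_dvd_iff_norm _ 2).mp hSd
    norm_num at this ⊢
    exact this
  have hpb'norm : ‖(p : ℤ_[p]) * (b + t) ^ (p - 1)‖ = (p : ℝ)⁻¹ := by
    rw [norm_mul, PadicInt.norm_p, norm_pow, hb'norm, one_pow, mul_one]
  have hSnorm : ‖S‖ = (p : ℝ)⁻¹ := by
    have h1 : S = (p : ℤ_[p]) * (b + t) ^ (p - 1) + (S - (p : ℤ_[p]) * (b + t) ^ (p - 1)) := by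
      ring
    rw [h1, aux_norm_add_eq, hpb'norm]
    rw [hpb'norm]
    calc ‖S - (p : ℤ_[p]) * (b + t) ^ (p - 1)‖ ≤ (p : ℝ) ^ (-2 : ℤ) := hSsubnorm
      _ < (p : ℝ)⁻¹ := by
          rw [← zpow_neg_one]
          exact zpow_lt_zpow_right₀ hpR1 (by norm_num)
  have hufac : u - (b + t) ^ p = S * (z - (b + t)) := by
    rw [← hzp]
    exact hfac.symm
  have hnormeq : ‖u - (b + t) ^ p‖ = (p : ℝ)⁻¹ * ‖z - (b + t)‖ := by
    rw [hufac, norm_mul, hSnorm]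
  have hzb'm : ‖z - (b + t)‖ ≤ (p : ℝ) ^ (-(m : ℤ)) := by
    have h1 : (p : ℝ)⁻¹ * ‖z - (b + t)‖ ≤ (p : ℝ) ^ (-((m + 1 : ℕ) : ℤ)) := by
      rw [← hnormeq]; exact hnormU
    have h2 : ‖z - (b + t)‖ ≤ (p : ℝ) * (p : ℝ) ^ (-((m + 1 : ℕ) : ℤ)) := by
      have h3 := mul_le_mul_of_nonneg_left h1 (le_of_lt hpR0)
      rwa [← mul_assoc, mul_inv_cancel₀ hpR0.ne', one_mul] at h3
    calc ‖z - (b + t)‖ ≤ (p : ℝ) * (p : ℝ) ^ (-((m + 1 : ℕ) : ℤ)) := h2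
      _ = (p : ℝ) ^ (-((m + 1 : ℕ) : ℤ) + 1) := by
          rw [zpow_add_one₀ hpR0.ne', mul_comm]
      _ = (p : ℝ) ^ (-(m : ℤ)) := by
          congr 1
          push_cast
          ring
  have hzb'dvd : (p : ℤ_[p]) ^ m ∣ z - (b + t) := (aux_dvd_iff_norm _ m).mpr hzb'm
  refine ⟨z, hzp, ?_⟩
  have h1 : z - b = (z - (b + t)) + t := by ring
  rw [h1]
  exact dvd_add (dvd_trans (pow_dvd_pow _ (by omega)) hzb'dvd) ht_dvd

private lemma aux_main {p : ℕ} [hp : Fact p.Prime] (e : ℕ) (he : p = 2 → e = 1) :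
    ∀ k : ℕ, 1 ≤ k → ∀ u a : ℤ_[p], IsUnit a →
      (p : ℤ_[p]) ^ (k + e + 1) ∣ u - a ^ (p ^ k) → ∃ v : ℤ_[p], v ^ (p ^ k) = u := by
  intro k hk
  induction k, hk using Nat.le_induction with
  | base =>
    intro u a ha hdvd
    rw [pow_one] at hdvd
    obtain ⟨w, hw, -⟩ := aux_step (1 + e + 1) (by omega)
      (fun h2 => by have := he h2; omega) a u ha hdvd
    exact ⟨w, by rwa [pow_one]⟩
  | succ k hk ih =>
    intro u a ha hdvd
    have hb : (a ^ (p ^ k)) ^ p = a ^ (p ^ (k + 1)) := by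
      rw [← pow_mul, ← pow_succ]
    rw [← hb] at hdvd
    obtain ⟨w, hw, hwd⟩ := aux_step (k + 1 + e + 1) (by omega) (fun _ => by omega)
      (a ^ (p ^ k)) u (ha.pow _) hdvd
    have h1 : k + 1 + e + 1 - 1 = k + e + 1 := by omega
    rw [h1] at hwd
    obtain ⟨v, hv⟩ := ih w a ha hwd
    exact ⟨v, by rw [pow_succ, pow_mul, hv, hw]⟩

theorem stmt_0 (p : ℕ) [Fact p.Prime] (k : ℕ) (hk : 1 ≤ k) (u : ℤ_[p]) (hu : IsUnit u) :
    (∃ v : ℤ_[p], v ^ (p ^ k) = u) ↔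
      (∃ a : ℤ_[p], (p : ℤ_[p]) ^ (k + (if p = 2 then 1 else 0) + 1) ∣ u - a ^ (p ^ k)) := by
  constructor
  · rintro ⟨v, rfl⟩
    exact ⟨v, by simp⟩
  · rintro ⟨a, ha⟩
    have ha' : IsUnit a := by
      have hpk : p ^ k ≠ 0 := pow_ne_zero _ (Fact.out (p := p.Prime)).pos.ne'
      rw [← isUnit_pow_iff hpk]
      rw [PadicInt.isUnit_iff]
      have h1 : ‖u - a ^ (p ^ k)‖ < 1 := by
        rw [PadicInt.norm_lt_one_iff_dvd]
        exact dvd_trans (dvd_pow_self _ (by omega : k + (if p = 2 then 1 else 0) + 1 ≠ 0)) ha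
      have h2 : ‖u‖ = 1 := PadicInt.isUnit_iff.mp hu
      have h3 : a ^ (p ^ k) = u + -(u - a ^ (p ^ k)) := by ring
      rw [h3, aux_norm_add_eq (by rw [norm_neg, h2]; exact h1), h2]
    exact aux_main (if p = 2 then 1 else 0) (fun h => by simp [h]) k hk u a ha' ha
end

section
/- Let p be a prime, k ≥ 1, ℓ ≥ 0 integers, and u a p-adic unit. If u is a p^k-th power residue modulo p^(k+v_p(2)+ℓ+1), then u is a p^k-th power residue modulo p^(k+v_p(2)+ℓ+2). -/
lemma expand_p {R : Type*} [CommRing R] (p : ℕ) (hp : p.Prime) (B C : R) :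
    ∃ E : R, (B + C) ^ p = B ^ p + p * B ^ (p - 1) * C + p * C ^ 2 * E + C ^ p := by
  obtain ⟨n, rfl⟩ : ∃ n, p = n + 2 := ⟨p - 2, by have := hp.two_le; omega⟩
  refine ⟨∑ i ∈ Finset.range n, ((n + 2).choose (i + 1) / (n + 2) : ℕ) * B ^ (i + 1) *
    C ^ (n - 1 - i), ?_⟩
  rw [add_pow, Finset.sum_range_succ, Finset.sum_range_succ, Finset.sum_range_succ']
  have hmid : ∑ i ∈ Finset.range n, (B ^ (i+1) * C ^ (n + 2 - (i+1)) * ((n+2).choose (i+1) : R))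
      = (n+2 : ℕ) * C^2 * ∑ i ∈ Finset.range n,
        ((n + 2).choose (i + 1) / (n + 2) : ℕ) * B ^ (i + 1) * C ^ (n - 1 - i) := by
    rw [Finset.mul_sum]
    refine Finset.sum_congr rfl fun i hi => ?_
    have hi' := Finset.mem_range.mp hi
    have hd : (n+2) ∣ (n+2).choose (i+1) := hp.dvd_choose_self (by omega) (by omega)
    have h2 : n + 2 - (i+1) = 2 + (n - 1 - i) := by omega
    have h3 : ((n+2).choose (i+1) : R) = ((n+2 : ℕ) : R) * (((n+2).choose (i+1) / (n+2) : ℕ) : R) := by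
      rw [← Nat.cast_mul, Nat.mul_div_cancel' hd]
    rw [h2, pow_add, h3]; ring
  rw [hmid]
  have e1 : n + 2 - (n + 1) = 1 := by omega
  have e2 : (n+2).choose (n+1) = n + 2 := by
    simpa using Nat.choose_succ_self_right (n+1)
  have e3 : n + 2 - 1 = n + 1 := by omega
  rw [e1, e2, e3]
  simp only [Nat.sub_zero, Nat.sub_self, pow_zero, pow_one, Nat.choose_self,
    Nat.choose_zero_right, Nat.cast_one, Nat.cast_ofNat, Nat.cast_add]
  push_cast
  ring

lemma key (p : ℕ) [hfp : Fact p.Prime] (j : ℕ) (hj : 1 ≤ j) (hj2 : p = 2 → 2 ≤ j) (a s : ℤ_[p]) :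
    ∀ k : ℕ, ∃ r : ℤ_[p],
      (a + p ^ j * s) ^ (p ^ k) = a ^ (p ^ k) + p ^ (k + j) * (a ^ (p ^ k - 1) * s + p * r) := by
  have hp : p.Prime := hfp.out
  intro k
  induction k with
  | zero => exact ⟨0, by simp⟩
  | succ k ih =>
    obtain ⟨r, hr⟩ := ih
    set B : ℤ_[p] := a ^ (p ^ k) with hB
    set D : ℤ_[p] := a ^ (p ^ k - 1) * s + p * r with hD
    obtain ⟨E, hE⟩ := expand_p p hp B ((p : ℤ_[p]) ^ (k + j) * D)
    set M := k + j with hM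
    have hM1 : 1 ≤ M := by omega
    have hpM : M + 2 ≤ p * M := by
      have h2 : 2 ≤ p := hp.two_le
      rcases Nat.eq_or_lt_of_le h2 with h | h
      · have := hj2 h.symm
        rw [← h]; omega
      · nlinarith
    refine ⟨B ^ (p - 1) * r + p ^ (M - 1) * (D ^ 2 * E) + p ^ (p * M - (M + 2)) * D ^ p, ?_⟩
    have hpow : (a + (p : ℤ_[p]) ^ j * s) ^ p ^ (k + 1) = (B + (p : ℤ_[p]) ^ (k + j) * D) ^ p := by
      rw [pow_succ, pow_mul, hr]
    rw [hpow, hE]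
    have hBp : B ^ p = a ^ (p ^ (k + 1)) := by rw [hB, ← pow_mul, ← pow_succ]
    have hexp : p ^ k * (p - 1) + (p ^ k - 1) = p ^ (k + 1) - 1 := by
      have h1 : 1 ≤ p ^ k := Nat.one_le_pow _ _ hp.pos
      have h2 : p ^ k * (p - 1) = p ^ k * p - p ^ k := by
        rw [Nat.mul_sub, Nat.mul_one]
      have h3 : p ^ (k+1) = p ^ k * p := pow_succ p k
      obtain ⟨t, ht⟩ : ∃ t, p ^ k * p = t := ⟨_, rfl⟩
      have h4 : p ^ k ≤ t := ht ▸ Nat.le_mul_of_pos_right _ hp.pos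
      rw [h2, h3, ht]
      omega
    have hBD : B ^ (p - 1) * a ^ (p ^ k - 1) = a ^ (p ^ (k+1) - 1) := by
      rw [hB, ← pow_mul, ← pow_add, hexp]
    have e1 : (1 : ℕ) + 2 * M = (M + 2) + (M - 1) := by omega
    have e2 : p * M = (M + 2) + (p * M - (M + 2)) := by omega
    have hC2 : ((p : ℤ_[p]) ^ M * D) ^ 2 = p ^ (2 * M) * D ^ 2 := by
      rw [mul_pow, ← pow_mul, Nat.mul_comm]
    have hCp : ((p : ℤ_[p]) ^ M * D) ^ p = p ^ (p * M) * D ^ p := by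
      rw [mul_pow, ← pow_mul, Nat.mul_comm]
    rw [hC2, hCp, hBp]
    have hM2 : k + 1 + j = M + 1 := by omega
    rw [hM2]
    have hp1 : (p : ℤ_[p]) * p ^ (2 * M) = p ^ ((M+2) + (M-1)) := by
      rw [← e1, pow_add, pow_one, pow_mul]
    have hp2 : (p : ℤ_[p]) ^ (p * M) = p ^ ((M+2) + (p * M - (M + 2))) := by rw [← e2]
    calc a ^ p ^ (k + 1) + ↑p * B ^ (p - 1) * (↑p ^ M * D) + ↑p * (↑p ^ (2*M) * D ^ 2) * E
          + ↑p ^ (p * M) * D ^ p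
        = a ^ p ^ (k + 1) + ↑p ^ (M+1) * (B ^ (p-1) * D) + (↑p * ↑p ^ (2*M)) * (D^2 * E)
          + ↑p ^ (p * M) * D ^ p := by ring
      _ = a ^ p ^ (k + 1) + ↑p ^ (M + 1) *
            (a ^ (p ^ (k + 1) - 1) * s + ↑p * (B ^ (p - 1) * r + ↑p ^ (M - 1) * (D ^ 2 * E)
              + ↑p ^ (p * M - (M + 2)) * D ^ p)) := by
          rw [hp1, hp2, hD]
          rw [mul_add (B ^ (p-1)), ← mul_assoc (B ^ (p-1)), hBD]
          rw [pow_add, pow_add]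
          ring

theorem stmt_1 (p : ℕ) [Fact p.Prime] (k : ℕ) (hk : 1 ≤ k) (l : ℕ) (u : ℤ_[p]) (hu : IsUnit u)
    (h : ∃ a : ℤ_[p], (p : ℤ_[p]) ^ (k + (if p = 2 then 1 else 0) + l + 1) ∣ u - a ^ (p ^ k)) :
    ∃ a : ℤ_[p], (p : ℤ_[p]) ^ (k + (if p = 2 then 1 else 0) + l + 2) ∣ u - a ^ (p ^ k) := by
  have hp : p.Prime := Fact.out
  obtain ⟨a, t, ht⟩ := h
  set e : ℕ := if p = 2 then 1 else 0 with he
  set m : ℕ := k + e + l + 1 with hm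
  have hm1 : m ≠ 0 := by omega
  have hnup : ¬ IsUnit ((p : ℤ_[p]) ^ m * t) := by
    intro hx
    have hup : IsUnit (p : ℤ_[p]) :=
      isUnit_of_dvd_unit (dvd_mul_of_dvd_left (dvd_pow_self _ hm1) _) hx
    have hn := PadicInt.isUnit_iff.mp hup
    rw [PadicInt.norm_p] at hn
    have : (1 : ℝ) < p := by exact_mod_cast hp.one_lt
    rw [inv_eq_one] at hn
    linarith
  have husum : IsUnit (a ^ (p ^ k) + (p : ℤ_[p]) ^ m * t) := by
    have : a ^ (p ^ k) + (p : ℤ_[p]) ^ m * t = u := by rw [← ht]; ring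
    rw [this]; exact hu
  have haU : IsUnit a := by
    rcases IsLocalRing.isUnit_or_isUnit_of_isUnit_add husum with hca | hca
    · exact (isUnit_pow_iff (pow_pos hp.pos k).ne').mp hca
    · exact absurd hca hnup
  set s : ℤ_[p] := (haU.unit⁻¹).val ^ (p ^ k - 1) * t with hsdef
  have hs : a ^ (p ^ k - 1) * s = t := by
    rw [hsdef, ← mul_assoc, ← mul_pow, haU.mul_val_inv, one_pow, one_mul]
  have hj2 : p = 2 → 2 ≤ e + l + 1 := by intro h2; simp only [he, if_pos h2]; omega
  obtain ⟨r, hr⟩ := key p (e + l + 1) (by omega) hj2 a s k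
  refine ⟨a + (p : ℤ_[p]) ^ (e + l + 1) * s, -r, ?_⟩
  rw [hr]
  have hkm : k + (e + l + 1) = m := by omega
  rw [hkm, hs]
  have hmm : k + e + l + 2 = m + 1 := by omega
  rw [hmm]
  linear_combination ht
end

section
/- Let p be a prime and n ≥ 3, and let a, b be nonzero integers with p ∤ ab. If -a^{-1}b is an n-th power in Z_p, then the quotient set R(F) of the form F(x,y) = a x^n + b y^n is dense in Q_p. -/
open Polynomial

lemma solve_step (p : ℕ) [Fact p.Prime] (n : ℕ) (a b : ℤ)
    (u : ℤ_[p]) (hu : (a : ℤ_[p]) * u ^ n = -b)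
    (s : ℤ_[p]) (hs : ‖s‖ < ‖(n : ℤ_[p]) * a * u ^ (n-1)‖ ^ 2) :
    ∃ t : ℤ_[p], (a : ℤ_[p]) * t ^ n + b = s := by
  set F : Polynomial ℤ_[p] := C (a : ℤ_[p]) * X ^ n + C ((b : ℤ_[p]) - s) with hF
  have heval : F.eval u = -s := by simp [hF, hu]; ring
  have hderiv_eval : F.derivative.eval u = (a : ℤ_[p]) * n * u ^ (n - 1) := by
    simp [hF, Polynomial.derivative_C_mul, Polynomial.derivative_X_pow]
    ring
  have hnorm : ‖F.eval u‖ < ‖F.derivative.eval u‖ ^ 2 := by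
    rw [heval, hderiv_eval, norm_neg]
    have : (a : ℤ_[p]) * n * u ^ (n-1) = (n : ℤ_[p]) * a * u ^ (n-1) := by ring
    rw [this]; exact hs
  obtain ⟨z, hz, -⟩ := hensels_lemma hnorm
  refine ⟨z, ?_⟩
  have : (a : ℤ_[p]) * z ^ n + ((b : ℤ_[p]) - s) = 0 := by simpa [hF] using hz
  linear_combination this

theorem stmt_2 (p : ℕ) [Fact p.Prime] (n : ℕ) (hn : 3 ≤ n) (a b : ℤ) (ha : a ≠ 0) (hb : b ≠ 0)
    (hpab : ¬ (p : ℤ) ∣ a * b)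
    (h : ∃ u : ℤ_[p], (a : ℤ_[p]) * u ^ n = -b) :
    Dense {q : ℚ_[p] | ∃ x y z w : ℤ,
      a * z ^ n + b * w ^ n ≠ 0 ∧
      q = ((a * x ^ n + b * y ^ n : ℤ) : ℚ_[p]) / ((a * z ^ n + b * w ^ n : ℤ) : ℚ_[p])} := by
  obtain ⟨u, hu⟩ := h
  have hbz : ((b : ℤ_[p])) ≠ 0 := Int.cast_ne_zero.mpr hb
  have haz : ((a : ℤ_[p])) ≠ 0 := Int.cast_ne_zero.mpr ha
  have hnz : ((n : ℤ_[p])) ≠ 0 := Nat.cast_ne_zero.mpr (by omega)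
  have huz : u ≠ 0 := by
    intro h0
    rw [h0, zero_pow (by omega), mul_zero] at hu
    exact hbz (by simpa using hu.symm)
  set c : ℝ := ‖(n : ℤ_[p]) * a * u ^ (n-1)‖ with hc
  have hc0 : 0 < c := by
    rw [hc, norm_pos_iff]
    exact mul_ne_zero (mul_ne_zero hnz haz) (pow_ne_zero _ huz)
  have hc1 : c ≤ 1 := PadicInt.norm_le_one _
  have hc2 : c ^ 2 ≤ 1 := by nlinarith
  set r : ℝ := (p : ℝ)⁻¹ with hr
  have hp1 : (1 : ℝ) < p := by exact_mod_cast (Fact.out : p.Prime).one_lt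
  have hr0 : 0 < r := by rw [hr]; positivity
  have hr1 : r < 1 := by rw [hr]; exact inv_lt_one_of_one_lt₀ hp1
  rw [Metric.dense_iff]
  intro q ε hε
  set Mq : ℝ := max ‖q‖ 1 with hMq
  have hMq1 : (1 : ℝ) ≤ Mq := le_max_right _ _
  have hMq0 : (0 : ℝ) < Mq := by linarith
  have hqMq : ‖q‖ ≤ Mq := le_max_left _ _
  obtain ⟨K, hK⟩ := exists_pow_lt_of_lt_one (div_pos (by positivity : (0:ℝ) < c^2) hMq0) hr1
  have hK' : r ^ K * Mq < c ^ 2 := by rw [← lt_div_iff₀ hMq0]; exact hK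
  set β₀ : ℤ_[p] := (p : ℤ_[p]) ^ K with hβ₀def
  have hβnorm : ‖β₀‖ = r ^ K := by
    rw [hβ₀def, PadicInt.norm_p_pow, hr, zpow_neg, zpow_natCast, inv_pow]
  have hrK0 : (0:ℝ) < r ^ K := by positivity
  have hβQnorm : ‖(β₀ : ℚ_[p])‖ = r ^ K := by rw [← PadicInt.norm_def, hβnorm]
  have hqβ : ‖q * (β₀ : ℚ_[p])‖ ≤ Mq * r ^ K := by
    rw [norm_mul, hβQnorm]
    exact mul_le_mul_of_nonneg_right hqMq hrK0.le
  have hMqrK : Mq * r ^ K < c ^ 2 := by rw [mul_comm]; exact hK'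
  set α₀ : ℤ_[p] := ⟨q * (β₀ : ℚ_[p]), le_trans hqβ (le_trans hMqrK.le hc2)⟩ with hα₀def
  have hα₀coe : ((α₀ : ℚ_[p])) = q * (β₀ : ℚ_[p]) := rfl
  have hα₀norm : ‖α₀‖ ≤ Mq * r ^ K := by rw [PadicInt.norm_def, hα₀coe]; exact hqβ
  obtain ⟨s, hs⟩ := solve_step p n a b u hu α₀ (lt_of_le_of_lt hα₀norm hMqrK)
  obtain ⟨t, ht⟩ := solve_step p n a b u hu β₀ (by
    rw [hβnorm]
    calc r ^ K = 1 * r ^ K := (one_mul _).symm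
    _ ≤ Mq * r ^ K := by gcongr
    _ < c ^ 2 := hMqrK)
  have hδ0 : (0:ℝ) < min (r ^ K) (ε * r ^ K / Mq) := lt_min hrK0 (by positivity)
  obtain ⟨N, hN⟩ := exists_pow_lt_of_lt_one hδ0 hr1
  have hrN0 : (0:ℝ) < r ^ N := by positivity
  have hNK : r ^ N < r ^ K := lt_of_lt_of_le hN (min_le_left _ _)
  have hNε : r ^ N < ε * r ^ K / Mq := lt_of_lt_of_le hN (min_le_right _ _)
  have happrox : ∀ w : ℤ_[p], ‖((w.appr N : ℤ) : ℤ_[p]) - w‖ ≤ r ^ N := fun w => by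
    have hmem := (PadicInt.norm_le_pow_iff_mem_span_pow (w - (w.appr N : ℤ_[p])) N).mpr
      (PadicInt.appr_spec N w)
    rw [norm_sub_rev] at hmem
    calc ‖((w.appr N : ℤ) : ℤ_[p]) - w‖ = ‖(w.appr N : ℤ_[p]) - w‖ := by push_cast; ring_nf
    _ ≤ (p : ℝ) ^ (-(N:ℤ)) := hmem
    _ = r ^ N := by rw [hr, zpow_neg, zpow_natCast, inv_pow]
  set X : ℤ := (s.appr N : ℤ) with hX
  set Z : ℤ := (t.appr N : ℤ) with hZ
  set A' : ℤ_[p] := (a : ℤ_[p]) * (X : ℤ_[p]) ^ n + b with hA'def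
  set B' : ℤ_[p] := (a : ℤ_[p]) * (Z : ℤ_[p]) ^ n + b with hB'def
  have key : ∀ (w : ℤ_[p]) (Y : ℤ), ‖(Y : ℤ_[p]) - w‖ ≤ r ^ N →
      ‖((a : ℤ_[p]) * (Y : ℤ_[p]) ^ n + b) - ((a : ℤ_[p]) * w ^ n + b)‖ ≤ r ^ N := by
    intro w Y hY
    obtain ⟨d, hd⟩ := sub_dvd_pow_sub_pow ((Y : ℤ_[p])) w n
    have heq : ((a : ℤ_[p]) * (Y : ℤ_[p]) ^ n + b) - ((a : ℤ_[p]) * w ^ n + b)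
        = (a : ℤ_[p]) * (((Y : ℤ_[p]) - w) * d) := by rw [← hd]; ring
    rw [heq, norm_mul, norm_mul]
    calc ‖(a : ℤ_[p])‖ * (‖(Y : ℤ_[p]) - w‖ * ‖d‖) ≤ 1 * (r ^ N * 1) := by
          refine mul_le_mul (PadicInt.norm_le_one _) ?_ (by positivity) zero_le_one
          exact mul_le_mul hY (PadicInt.norm_le_one _) (norm_nonneg _) hrN0.le
    _ = r ^ N := by ring
  have hAs : ‖A' - α₀‖ ≤ r ^ N := by
    have := key s X (happrox s)
    rwa [hs] at this
  have hBt : ‖B' - β₀‖ ≤ r ^ N := by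
    have := key t Z (happrox t)
    rwa [ht] at this
  have h1 : ‖B' - β₀‖ < ‖β₀‖ := by rw [hβnorm]; exact lt_of_le_of_lt hBt hNK
  have hBle : ‖B'‖ ≤ ‖β₀‖ := by
    have h3 := PadicInt.nonarchimedean (B' - β₀) β₀
    rw [sub_add_cancel] at h3
    exact h3.trans (max_le h1.le le_rfl)
  have hBge : ‖β₀‖ ≤ ‖B'‖ := by
    by_contra hcon
    push_neg at hcon
    have h2 : ‖β₀ - B'‖ < ‖β₀‖ := by rwa [norm_sub_rev] at h1
    have h3 := PadicInt.nonarchimedean (β₀ - B') B'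
    rw [sub_add_cancel] at h3
    exact absurd h3 (not_le.mpr (max_lt h2 hcon))
  have hBnorm' : ‖B'‖ = r ^ K := by rw [← hβnorm]; exact le_antisymm hBle hBge
  have hB'ne : B' ≠ 0 := by
    intro h0; rw [h0, norm_zero] at hBnorm'; linarith
  have hDcast : ((a * Z ^ n + b * 1 ^ n : ℤ) : ℚ_[p]) = (B' : ℚ_[p]) := by
    rw [hB'def]; push_cast; ring
  have hNcast : ((a * X ^ n + b * 1 ^ n : ℤ) : ℚ_[p]) = (A' : ℚ_[p]) := by
    rw [hA'def]; push_cast; ring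
  have hDne : (a * Z ^ n + b * 1 ^ n : ℤ) ≠ 0 := by
    intro h0
    apply hB'ne
    have h4 : ((B' : ℤ_[p]) : ℚ_[p]) = 0 := by rw [← hDcast, h0]; simp
    exact Subtype.ext h4
  refine ⟨((a * X ^ n + b * 1 ^ n : ℤ) : ℚ_[p]) / ((a * Z ^ n + b * 1 ^ n : ℤ) : ℚ_[p]),
    ?_, ⟨X, 1, Z, 1, hDne, rfl⟩⟩
  rw [Metric.mem_ball, dist_eq_norm, hNcast, hDcast]
  set Aq : ℚ_[p] := (A' : ℚ_[p]) with hAq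
  set Bq : ℚ_[p] := (B' : ℚ_[p]) with hBq
  have hBqnorm : ‖Bq‖ = r ^ K := by rw [hBq, ← PadicInt.norm_def, hBnorm']
  have hBqne : Bq ≠ 0 := by
    intro h0; rw [h0, norm_zero] at hBqnorm; linarith
  have hsplit : Aq / Bq - q = (Aq - q * Bq) / Bq := by field_simp
  have hdecomp : Aq - q * Bq = ((A' - α₀ : ℤ_[p]) : ℚ_[p]) + q * ((β₀ - B' : ℤ_[p]) : ℚ_[p]) := by
    rw [PadicInt.coe_sub, PadicInt.coe_sub, hα₀coe, hAq, hBq]; ring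
  have hnum : ‖Aq - q * Bq‖ ≤ Mq * r ^ N := by
    rw [hdecomp]
    refine le_trans (Padic.nonarchimedean _ _) (max_le ?_ ?_)
    · rw [← PadicInt.norm_def]
      calc ‖A' - α₀‖ ≤ r ^ N := hAs
      _ = 1 * r ^ N := (one_mul _).symm
      _ ≤ Mq * r ^ N := by gcongr
    · rw [norm_mul, ← PadicInt.norm_def, norm_sub_rev]
      exact mul_le_mul hqMq hBt (norm_nonneg _) hMq0.le
  calc ‖Aq / Bq - q‖ = ‖Aq - q * Bq‖ / ‖Bq‖ := by rw [hsplit, norm_div]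
  _ ≤ (Mq * r ^ N) / r ^ K := by rw [hBqnorm]; gcongr
  _ < ε := by
      rw [div_lt_iff₀ hrK0]
      have := (lt_div_iff₀ hMq0).mp hNε
      linarith
end

section
/- Let p be a prime, n ≥ 3, and let a = p^k·ℓ and b be nonzero integers with p ∤ ℓb and n | k. Then the quotient set of F(x,y) = a x^n + b y^n is dense in Q_p if and only if the quotient set of F̃(x,y) = ℓ x^n + b y^n is dense in Q_p. -/
theorem stmt_4 (p : ℕ) [Fact p.Prime] (n : ℕ) (hn : 3 ≤ n) (k : ℕ) (l b : ℤ)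
    (hl : l ≠ 0) (hb : b ≠ 0) (hplb : ¬ (p : ℤ) ∣ l * b) (hnk : n ∣ k) :
    Dense {q : ℚ_[p] | ∃ x y z w : ℤ,
        (p : ℤ) ^ k * l * z ^ n + b * w ^ n ≠ 0 ∧
        q = (((p : ℤ) ^ k * l * x ^ n + b * y ^ n : ℤ) : ℚ_[p]) /
            (((p : ℤ) ^ k * l * z ^ n + b * w ^ n : ℤ) : ℚ_[p])} ↔
    Dense {q : ℚ_[p] | ∃ x y z w : ℤ,
        l * z ^ n + b * w ^ n ≠ 0 ∧
        q = ((l * x ^ n + b * y ^ n : ℤ) : ℚ_[p]) / ((l * z ^ n + b * w ^ n : ℤ) : ℚ_[p])} := by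
  obtain ⟨m, rfl⟩ := hnk
  have hp : (p : ℤ) ≠ 0 := by exact_mod_cast (Fact.out : p.Prime).ne_zero
  have hpk : ((p : ℤ) ^ (n * m)) ≠ 0 := pow_ne_zero _ hp
  have hseteq : {q : ℚ_[p] | ∃ x y z w : ℤ,
        (p : ℤ) ^ (n * m) * l * z ^ n + b * w ^ n ≠ 0 ∧
        q = (((p : ℤ) ^ (n * m) * l * x ^ n + b * y ^ n : ℤ) : ℚ_[p]) /
            (((p : ℤ) ^ (n * m) * l * z ^ n + b * w ^ n : ℤ) : ℚ_[p])} =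
      {q : ℚ_[p] | ∃ x y z w : ℤ,
        l * z ^ n + b * w ^ n ≠ 0 ∧
        q = ((l * x ^ n + b * y ^ n : ℤ) : ℚ_[p]) / ((l * z ^ n + b * w ^ n : ℤ) : ℚ_[p])} := by
    ext q
    constructor
    · rintro ⟨x, y, z, w, hz, rfl⟩
      refine ⟨(p : ℤ) ^ m * x, y, (p : ℤ) ^ m * z, w, ?_, ?_⟩
      · have : l * ((p : ℤ) ^ m * z) ^ n + b * w ^ n
            = (p : ℤ) ^ (n * m) * l * z ^ n + b * w ^ n := by ring
        rw [this]; exact hz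
      · congr 2 <;> push_cast <;> ring
    · rintro ⟨x, y, z, w, hz, rfl⟩
      refine ⟨x, (p : ℤ) ^ m * y, z, (p : ℤ) ^ m * w, ?_, ?_⟩
      · have : (p : ℤ) ^ (n * m) * l * z ^ n + b * ((p : ℤ) ^ m * w) ^ n
            = (p : ℤ) ^ (n * m) * (l * z ^ n + b * w ^ n) := by ring
        rw [this]
        exact mul_ne_zero hpk hz
      · have h1 : ((p : ℤ) ^ (n * m) * l * x ^ n + b * ((p : ℤ) ^ m * y) ^ n : ℤ)
            = (p : ℤ) ^ (n * m) * (l * x ^ n + b * y ^ n) := by ring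
        have h2 : ((p : ℤ) ^ (n * m) * l * z ^ n + b * ((p : ℤ) ^ m * w) ^ n : ℤ)
            = (p : ℤ) ^ (n * m) * (l * z ^ n + b * w ^ n) := by ring
        rw [h1, h2]
        push_cast
        rw [mul_div_mul_left]
        exact_mod_cast pow_ne_zero (n * m) (show ((p : ℤ) : ℚ_[p]) ≠ 0 by exact_mod_cast hp)
  rw [hseteq]
end

section
/- Let p be a prime and n ≥ 3 with gcd(n, p(p-1)) = 1. Let a, b be nonzero integers with v_p(a) ≡ v_p(b) (mod n). Then the quotient set R(F) of F(x,y) = a x^n + b y^n is dense in Q_p. -/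
private lemma root_lemma (p : ℕ) [Fact p.Prime] (n : ℕ)
    (hgcd : Nat.gcd n (p * (p - 1)) = 1) (M : ℕ) (c T : ℤ)
    (hc : ¬ (p:ℤ) ∣ c) (hT : ¬ (p:ℤ) ∣ T) :
    ∃ x : ℤ, (p:ℤ)^M ∣ c * x^n - T := by
  rcases Nat.eq_zero_or_pos M with rfl | hM
  · exact ⟨0, by simp⟩
  have hp : p.Prime := Fact.out
  haveI : NeZero (p ^ M) := ⟨pow_ne_zero _ hp.pos.ne'⟩
  have hcop : (Nat.card (ZMod (p^M))ˣ).Coprime n := by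
    rw [Nat.card_eq_fintype_card, ZMod.card_units_eq_totient, Nat.totient_prime_pow hp hM]
    have h1 : Nat.Coprime n p := Nat.Coprime.coprime_dvd_right ⟨p-1, rfl⟩ hgcd
    have h2 : Nat.Coprime n (p-1) := Nat.Coprime.coprime_dvd_right ⟨p, mul_comm _ _⟩ hgcd
    exact ((h1.pow_right _).mul_right h2).symm
  have hunit : ∀ d : ℤ, ¬ (p:ℤ) ∣ d → IsUnit (d : ZMod (p^M)) := by
    intro d hd
    have hcd : Nat.Coprime d.natAbs (p^M) := by
      refine Nat.Coprime.pow_right _ ?_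
      rw [Nat.coprime_comm]
      refine (Nat.Prime.coprime_iff_not_dvd hp).mpr ?_
      rwa [Int.natCast_dvd] at hd
    have hu : IsUnit ((d.natAbs : ℕ) : ZMod (p^M)) := (ZMod.isUnit_iff_coprime _ _).mpr hcd
    rcases Int.natAbs_eq d with h | h
    · rw [h, Int.cast_natCast]; exact hu
    · rw [h, Int.cast_neg, Int.cast_natCast]; exact hu.neg
  have hcu := hunit c hc
  have hTu := hunit T hT
  obtain ⟨v, hv⟩ := hcop.pow_left_bijective.surjective (hcu.unit⁻¹ * hTu.unit)
  refine ⟨(((v : ZMod (p^M)).val : ℤ)), ?_⟩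
  have hcast : ((((v : ZMod (p^M)).val : ℤ)) : ZMod (p^M)) = (v : ZMod (p^M)) := by
    rw [Int.cast_natCast, ZMod.natCast_val, ZMod.cast_id]
  rw [← Int.natCast_pow, ← ZMod.intCast_zmod_eq_zero_iff_dvd]
  push_cast [hcast]
  have hv' : ((v : ZMod (p^M)))^n = ((hcu.unit⁻¹ * hTu.unit : (ZMod (p^M))ˣ) : ZMod (p^M)) := by
    rw [← hv]; simp
  rw [hv']
  have : (c : ZMod (p^M)) * ((hcu.unit⁻¹ * hTu.unit : (ZMod (p^M))ˣ) : ZMod (p^M)) = (T : ZMod (p^M)) :=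
    calc (c : ZMod (p^M)) * ((hcu.unit⁻¹ * hTu.unit : (ZMod (p^M))ˣ) : ZMod (p^M))
        = (hcu.unit : ZMod (p^M)) * ((hcu.unit⁻¹ * hTu.unit : (ZMod (p^M))ˣ) : ZMod (p^M)) := by
          rw [IsUnit.unit_spec]
      _ = ((hcu.unit * (hcu.unit⁻¹ * hTu.unit) : (ZMod (p^M))ˣ) : ZMod (p^M)) := (Units.val_mul _ _).symm
      _ = (hTu.unit : ZMod (p^M)) := by rw [mul_inv_cancel_left]
      _ = (T : ZMod (p^M)) := IsUnit.unit_spec hTu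
  rw [this]; ring


private lemma rep_lemma (p : ℕ) [Fact p.Prime] (n : ℕ)
    (hgcd : Nat.gcd n (p * (p - 1)) = 1)
    (a₀ b₀ : ℤ) (ha₀ : ¬(p:ℤ) ∣ a₀) (hb₀ : ¬(p:ℤ) ∣ b₀)
    (hn : n ≠ 0) (α m r N : ℕ) (T : ℤ) (hT : ¬(p:ℤ) ∣ T) :
    ∃ x y : ℤ, (p:ℤ)^(α + n*m + r + N) ∣
      ((p:ℤ)^α * a₀) * x^n + ((p:ℤ)^(α + n*m) * b₀) * y^n - (p:ℤ)^(α + n*m + r) * T := by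
  have hp : p.Prime := Fact.out
  have hpz : ¬ (p:ℤ) ∣ 1 := by
    intro h
    have h1 := Int.le_of_dvd one_pos h
    have h2 := hp.one_lt
    omega
  rcases Nat.eq_zero_or_pos r with rfl | hr
  · obtain ⟨x₀, hx₀⟩ := root_lemma p n hgcd N a₀ T ha₀ hT
    refine ⟨(p:ℤ)^m * x₀, 0, ?_⟩
    obtain ⟨k, hk⟩ := hx₀
    refine ⟨k, ?_⟩
    have : a₀ * x₀ ^ n = T + (p:ℤ)^N * k := by linarith [hk]
    calc ((p:ℤ)^α * a₀) * ((p:ℤ)^m * x₀)^n + ((p:ℤ)^(α + n*m) * b₀) * 0^n - (p:ℤ)^(α + n*m + 0) * T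
        = (p:ℤ)^(α + n*m) * (a₀ * x₀^n - T) := by
          rw [zero_pow hn, mul_pow, ← pow_mul, pow_add, pow_add]
          ring
      _ = (p:ℤ)^(α + n*m + 0 + N) * k := by rw [hk]; rw [pow_add, pow_add]; ring
  · obtain ⟨x₀, hx₀⟩ := root_lemma p n hgcd (r + N) a₀ 1 ha₀ hpz
    have hT' : ¬ (p:ℤ) ∣ ((p:ℤ)^r * T - 1) := by
      intro h
      have : (p:ℤ) ∣ (p:ℤ)^r * T := Dvd.dvd.mul_right (dvd_pow_self _ hr.ne') T
      exact hpz (by simpa using dvd_sub this h)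
    obtain ⟨y₀, hy₀⟩ := root_lemma p n hgcd (r + N) b₀ ((p:ℤ)^r * T - 1) hb₀ hT'
    refine ⟨(p:ℤ)^m * x₀, y₀, ?_⟩
    obtain ⟨k, hk⟩ := hx₀
    obtain ⟨l, hl⟩ := hy₀
    refine ⟨k + l, ?_⟩
    calc ((p:ℤ)^α * a₀) * ((p:ℤ)^m * x₀)^n + ((p:ℤ)^(α + n*m) * b₀) * y₀^n - (p:ℤ)^(α + n*m + r) * T
        = (p:ℤ)^(α + n*m) * ((a₀ * x₀^n - 1) + (b₀ * y₀^n - ((p:ℤ)^r * T - 1))) := by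
          rw [mul_pow, ← pow_mul, pow_add, pow_add]
          ring
      _ = (p:ℤ)^(α + n*m) * ((p:ℤ)^(r+N) * k + (p:ℤ)^(r+N) * l) := by rw [hk, hl]
      _ = (p:ℤ)^(α + n*m + r + N) * (k + l) := by rw [pow_add, pow_add, pow_add]; ring


private lemma factor_lemma (p : ℕ) [Fact p.Prime] (a : ℤ) (ha : a ≠ 0) :
    ∃ a₀ : ℤ, a = (p:ℤ)^(padicValInt p a) * a₀ ∧ ¬ (p:ℤ) ∣ a₀ := by
  obtain ⟨a₀, h⟩ := padicValInt_dvd (p := p) a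
  refine ⟨a₀, h, fun hdvd => ?_⟩
  obtain ⟨c, hc⟩ := hdvd
  have hd : (p:ℤ)^(padicValInt p a + 1) ∣ a := by
    refine ⟨c, ?_⟩
    conv_lhs => rw [h, hc]
    rw [pow_succ]
    ring
  rcases (padicValInt_dvd_iff _ a).mp hd with h0 | hle
  · exact ha h0
  · omega

private lemma main_dense (p : ℕ) [Fact p.Prime] (n : ℕ) (hn3 : 3 ≤ n)
    (hgcd : Nat.gcd n (p * (p - 1)) = 1) (a b : ℤ) (ha : a ≠ 0) (hb : b ≠ 0)
    (hle : padicValInt p a ≤ padicValInt p b)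
    (hval : (padicValInt p a : ℤ) ≡ (padicValInt p b : ℤ) [ZMOD (n : ℤ)]) :
    Dense {q : ℚ_[p] | ∃ x y z w : ℤ, a * z ^ n + b * w ^ n ≠ 0 ∧
      q = ((a * x ^ n + b * y ^ n : ℤ) : ℚ_[p]) / ((a * z ^ n + b * w ^ n : ℤ) : ℚ_[p])} := by
  have hp : p.Prime := Fact.out
  have hn : n ≠ 0 := by omega
  have hpz : ¬ (p:ℤ) ∣ 1 := by
    intro h
    have h1 := Int.le_of_dvd one_pos h
    have h2 := hp.one_lt
    omega
  have hp0R : (0:ℝ) < p := by exact_mod_cast hp.pos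
  have hp1R : (1:ℝ) < p := by exact_mod_cast hp.one_lt
  have hpRne : (p:ℝ) ≠ 0 := ne_of_gt hp0R
  have hPnz : (p:ℚ_[p]) ≠ 0 := Nat.cast_ne_zero.mpr hp.pos.ne'
  obtain ⟨a₀, haf, ha₀⟩ := factor_lemma p a ha
  obtain ⟨b₀, hbf, hb₀⟩ := factor_lemma p b hb
  set α := padicValInt p a with hαdef
  set β := padicValInt p b with hβdef
  obtain ⟨m, hm⟩ : ∃ m : ℕ, β = α + n * m := by
    obtain ⟨k, hk⟩ : (n:ℤ) ∣ (β:ℤ) - (α:ℤ) := Int.ModEq.dvd hval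
    have hk0 : 0 ≤ k := by
      by_contra hneg
      push_neg at hneg
      have h1 : (n:ℤ) * k < 0 := mul_neg_of_pos_of_neg (by exact_mod_cast Nat.pos_of_ne_zero hn) hneg
      have h2 : (0:ℤ) ≤ (β:ℤ) - α := by
        have : (α:ℤ) ≤ β := by exact_mod_cast hle
        linarith
      linarith
    refine ⟨k.toNat, ?_⟩
    have hkk : ((n * k.toNat : ℕ) : ℤ) = (n:ℤ) * k := by
      push_cast [Int.toNat_of_nonneg hk0]
      ring
    have : (β:ℤ) = (α:ℤ) + ((n * k.toNat : ℕ) : ℤ) := by rw [hkk]; linarith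
    exact_mod_cast this
  rw [hm] at hbf
  set e := α + n * m with hedef
  rw [Metric.dense_iff]
  intro q ε hε
  by_cases hq : q = 0
  · refine ⟨0, Metric.mem_ball.mpr (by simpa [hq] using hε), 0, 0, 1, 0, ?_, ?_⟩
    · simpa [zero_pow hn] using ha
    · simp [zero_pow hn]
  -- main case
  set K : ℤ := q.valuation with hKdef
  have hnormq : ‖q‖ = (p:ℝ)^(-K) := Padic.norm_eq_zpow_neg_valuation hq
  -- choose N
  obtain ⟨N, hN1, hNe⟩ : ∃ N : ℕ, 1 ≤ N ∧ (p:ℝ)^(-K - N) < ε := by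
    have hC : (0:ℝ) < (p:ℝ)^(-K) := zpow_pos hp0R _
    have hinv1 : (p:ℝ)⁻¹ < 1 := inv_lt_one_of_one_lt₀ hp1R
    have hinv0 : (0:ℝ) ≤ (p:ℝ)⁻¹ := by positivity
    obtain ⟨N₀, hN₀⟩ := exists_pow_lt_of_lt_one (div_pos hε hC) hinv1
    refine ⟨N₀ + 1, le_add_self, ?_⟩
    have hkey : (p:ℝ)^(-K - (N₀+1:ℕ)) = (p:ℝ)^(-K) * ((p:ℝ)⁻¹)^(N₀+1) := by
      rw [zpow_sub₀ hpRne, zpow_natCast, inv_pow]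
      ring
    rw [hkey]
    calc (p:ℝ)^(-K) * ((p:ℝ)⁻¹)^(N₀+1)
        ≤ (p:ℝ)^(-K) * ((p:ℝ)⁻¹)^N₀ :=
          mul_le_mul_of_nonneg_left (pow_le_pow_of_le_one hinv0 (le_of_lt hinv1) (Nat.le_succ _)) (le_of_lt hC)
      _ < (p:ℝ)^(-K) * (ε / (p:ℝ)^(-K)) := by
          exact mul_lt_mul_of_pos_left hN₀ hC
      _ = ε := by field_simp
  -- unit part and its integer approximation
  set u : ℚ_[p] := q * (p:ℚ_[p])^(-K) with hu
  have hun : ‖u‖ = 1 := by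
    rw [hu, norm_mul, hnormq, Padic.norm_p_zpow, ← zpow_add₀ hpRne]
    simp
  have hqu : q = (p:ℚ_[p])^(K:ℤ) * u := by
    rw [hu, mul_comm q _, ← mul_assoc, ← zpow_add₀ hPnz]
    simp
  set uhat : ℤ_[p] := ⟨u, le_of_eq hun⟩ with huhatdef
  set T : ℤ := (uhat.appr N : ℤ) with hTdef
  have hTclose : ‖u - (T:ℚ_[p])‖ ≤ (p:ℝ)^(-(N:ℤ)) := by
    have hspec := PadicInt.appr_spec N uhat
    rw [Ideal.mem_span_singleton] at hspec
    obtain ⟨c, hc⟩ := hspec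
    have hcast : u - (T:ℚ_[p]) = ((p:ℚ_[p]))^N * (c:ℚ_[p]) := by
      have h2 := congrArg (fun z : ℤ_[p] => (z : ℚ_[p])) hc
      simp only [PadicInt.coe_sub, PadicInt.coe_mul, PadicInt.coe_pow, PadicInt.coe_natCast] at h2
      rw [hTdef]
      push_cast
      exact h2
    rw [hcast, norm_mul, Padic.norm_p_pow]
    calc (p:ℝ)^(-(N:ℤ)) * ‖(c:ℚ_[p])‖ ≤ (p:ℝ)^(-(N:ℤ)) * 1 := by
          refine mul_le_mul_of_nonneg_left ?_ (le_of_lt (zpow_pos hp0R _))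
          exact c.2
      _ = (p:ℝ)^(-(N:ℤ)) := mul_one _
  have hpN1 : (p:ℝ)^(-(N:ℤ)) < 1 := by
    have : (p:ℝ)^(-(N:ℤ)) < (p:ℝ)^(0:ℤ) := by
      apply zpow_lt_zpow_right₀ hp1R
      omega
    simpa using this
  have hT1 : ‖(T:ℚ_[p])‖ = 1 := by
    rcases lt_or_eq_of_le (Padic.norm_int_le_one (p := p) T) with hlt | heq
    · exfalso
      have hne : ‖u‖ ≠ ‖-(T:ℚ_[p])‖ := by
        rw [norm_neg, hun]
        exact (ne_of_gt hlt)
      have hmax := Padic.add_eq_max_of_ne hne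
      have : ‖u - (T:ℚ_[p])‖ = 1 := by
        rw [sub_eq_add_neg, hmax, norm_neg, hun]
        exact max_eq_left (le_of_lt hlt)
      rw [this] at hTclose
      linarith
    · exact heq
  have hTunit : ¬ (p:ℤ) ∣ T := by
    rw [← Padic.norm_intCast_lt_one_iff, hT1]
    simp
  set r : ℕ := K.toNat with hrdef
  set r' : ℕ := (-K).toNat with hr'def
  have hrr' : (r:ℤ) - (r':ℤ) = K := by omega
  obtain ⟨x, y, hX⟩ := rep_lemma p n hgcd a₀ b₀ ha₀ hb₀ hn α m r N T hTunit
  obtain ⟨z, w, hZ⟩ := rep_lemma p n hgcd a₀ b₀ ha₀ hb₀ hn α m r' N 1 hpz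
  set X := a * x^n + b * y^n with hXdef
  set Z := a * z^n + b * w^n with hZdef
  have hXeq : X - (p:ℤ)^(e+r) * T = ((p:ℤ)^α * a₀) * x^n + ((p:ℤ)^e * b₀) * y^n - (p:ℤ)^(e+r) * T := by
    rw [hXdef, haf, hbf]
  have hZeq : Z - (p:ℤ)^(e+r') * 1 = ((p:ℤ)^α * a₀) * z^n + ((p:ℤ)^e * b₀) * w^n - (p:ℤ)^(e+r') * 1 := by
    rw [hZdef, haf, hbf]
  -- p-adic norm facts
  have hXnorm1 : ‖(X:ℚ_[p]) - (p:ℚ_[p])^(e+r) * T‖ ≤ (p:ℝ)^(-((e+r+N:ℕ)):ℤ) := by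
    have hc : ((X - (p:ℤ)^(e+r)*T : ℤ) : ℚ_[p]) = (X:ℚ_[p]) - (p:ℚ_[p])^(e+r) * T := by push_cast; ring
    rw [← hc, Padic.norm_int_le_pow_iff_dvd, hXeq]
    exact hX
  have hZnorm1 : ‖(Z:ℚ_[p]) - (p:ℚ_[p])^(e+r')‖ ≤ (p:ℝ)^(-((e+r'+N:ℕ)):ℤ) := by
    have hc : ((Z - (p:ℤ)^(e+r')*1 : ℤ) : ℚ_[p]) = (Z:ℚ_[p]) - (p:ℚ_[p])^(e+r') := by push_cast; ring
    rw [← hc, Padic.norm_int_le_pow_iff_dvd, hZeq]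
    exact hZ
  have hstrict : ∀ s : ℕ, (p:ℝ)^(-((s+N:ℕ)):ℤ) < (p:ℝ)^(-(s:ℕ):ℤ) := by
    intro s
    apply zpow_lt_zpow_right₀ hp1R
    omega
  have hXnorm : ‖(X:ℚ_[p])‖ = (p:ℝ)^(-((e+r:ℕ)):ℤ) := by
    have hcn : ‖(p:ℚ_[p])^(e+r) * (T:ℚ_[p])‖ = (p:ℝ)^(-((e+r:ℕ)):ℤ) := by
      rw [norm_mul, Padic.norm_p_pow, hT1, mul_one]
    have hne : ‖(X:ℚ_[p]) - (p:ℚ_[p])^(e+r) * T‖ ≠ ‖(p:ℚ_[p])^(e+r) * (T:ℚ_[p])‖ := by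
      rw [hcn]
      exact ne_of_lt (lt_of_le_of_lt hXnorm1 (hstrict (e+r)))
    have hid : (X:ℚ_[p]) = ((X:ℚ_[p]) - (p:ℚ_[p])^(e+r) * T) + (p:ℚ_[p])^(e+r) * T := by ring
    rw [hid, Padic.add_eq_max_of_ne hne, hcn]
    exact max_eq_right (le_of_lt (lt_of_le_of_lt hXnorm1 (hstrict (e+r))))
  have hZnorm : ‖(Z:ℚ_[p])‖ = (p:ℝ)^(-((e+r':ℕ)):ℤ) := by
    have hcn : ‖((p:ℚ_[p])^(e+r') : ℚ_[p])‖ = (p:ℝ)^(-((e+r':ℕ)):ℤ) := Padic.norm_p_pow _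
    have hne : ‖(Z:ℚ_[p]) - (p:ℚ_[p])^(e+r')‖ ≠ ‖((p:ℚ_[p])^(e+r') : ℚ_[p])‖ := by
      rw [hcn]
      exact ne_of_lt (lt_of_le_of_lt hZnorm1 (hstrict (e+r')))
    have hid : (Z:ℚ_[p]) = ((Z:ℚ_[p]) - (p:ℚ_[p])^(e+r')) + (p:ℚ_[p])^(e+r') := by ring
    rw [hid, Padic.add_eq_max_of_ne hne, hcn]
    exact max_eq_right (le_of_lt (lt_of_le_of_lt hZnorm1 (hstrict (e+r'))))
  have hZQne : ((Z:ℤ):ℚ_[p]) ≠ 0 := by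
    intro h0
    rw [h0, norm_zero] at hZnorm
    exact (zpow_pos hp0R _).ne' hZnorm.symm
  have hZne : Z ≠ 0 := by
    intro h0
    apply hZQne
    rw [h0]
    simp
  refine ⟨(X:ℚ_[p]) / (Z:ℚ_[p]), Metric.mem_ball.mpr ?_, x, y, z, w, hZne, rfl⟩
  -- the distance estimate
  have hq_pow : q * (p:ℚ_[p])^(e+r') = (p:ℚ_[p])^(e+r) * u := by
    rw [hqu]
    rw [show ((p:ℚ_[p])^(e+r') : ℚ_[p]) = (p:ℚ_[p])^((e+r':ℕ):ℤ) from (zpow_natCast _ _).symm,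
        show ((p:ℚ_[p])^(e+r) : ℚ_[p]) = (p:ℚ_[p])^((e+r:ℕ):ℤ) from (zpow_natCast _ _).symm]
    rw [mul_assoc, mul_comm u _, ← mul_assoc, ← zpow_add₀ hPnz]
    congr 2
    omega
  have hid : q * (Z:ℚ_[p]) - (X:ℚ_[p]) =
      q * ((Z:ℚ_[p]) - (p:ℚ_[p])^(e+r')) + ((p:ℚ_[p])^(e+r) * (u - T) + ((p:ℚ_[p])^(e+r) * T - X)) := by
    have h1 := hq_pow
    ring_nf
    ring_nf at h1
    linear_combination h1
  have hnum : ‖q * (Z:ℚ_[p]) - (X:ℚ_[p])‖ ≤ (p:ℝ)^(-((e+r+N:ℕ)):ℤ) := by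
    rw [hid]
    refine le_trans (Padic.nonarchimedean _ _) (max_le ?_ (le_trans (Padic.nonarchimedean _ _) (max_le ?_ ?_)))
    · rw [norm_mul, hnormq]
      calc (p:ℝ)^(-K) * ‖(Z:ℚ_[p]) - (p:ℚ_[p])^(e+r')‖
          ≤ (p:ℝ)^(-K) * (p:ℝ)^(-((e+r'+N:ℕ)):ℤ) :=
            mul_le_mul_of_nonneg_left hZnorm1 (le_of_lt (zpow_pos hp0R _))
        _ = (p:ℝ)^(-((e+r+N:ℕ)):ℤ) := by
            rw [← zpow_add₀ hpRne]
            congr 1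
            omega
    · rw [norm_mul, Padic.norm_p_pow]
      calc (p:ℝ)^(-((e+r:ℕ)):ℤ) * ‖u - (T:ℚ_[p])‖
          ≤ (p:ℝ)^(-((e+r:ℕ)):ℤ) * (p:ℝ)^(-(N:ℤ)) :=
            mul_le_mul_of_nonneg_left hTclose (le_of_lt (zpow_pos hp0R _))
        _ = (p:ℝ)^(-((e+r+N:ℕ)):ℤ) := by
            rw [← zpow_add₀ hpRne]
            congr 1
            omega
    · rw [show (p:ℚ_[p])^(e+r) * (T:ℚ_[p]) - (X:ℚ_[p]) = -((X:ℚ_[p]) - (p:ℚ_[p])^(e+r) * T) by ring,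
          norm_neg]
      exact hXnorm1
  have hdist : dist ((X:ℚ_[p]) / (Z:ℚ_[p])) q = ‖q * (Z:ℚ_[p]) - (X:ℚ_[p])‖ / ‖(Z:ℚ_[p])‖ := by
    rw [dist_comm, dist_eq_norm, ← norm_div]
    congr 1
    field_simp
  rw [hdist, hZnorm]
  calc ‖q * (Z:ℚ_[p]) - (X:ℚ_[p])‖ / (p:ℝ)^(-((e+r':ℕ)):ℤ)
      ≤ (p:ℝ)^(-((e+r+N:ℕ)):ℤ) / (p:ℝ)^(-((e+r':ℕ)):ℤ) := by
        gcongr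
    _ = (p:ℝ)^(-K - N) := by
        rw [← zpow_sub₀ hpRne]
        congr 1
        omega
    _ < ε := hNe


theorem stmt_6 (p : ℕ) [Fact p.Prime] (n : ℕ) (hn : 3 ≤ n)
    (hgcd : Nat.gcd n (p * (p - 1)) = 1) (a b : ℤ) (ha : a ≠ 0) (hb : b ≠ 0)
    (hval : (padicValInt p a : ℤ) ≡ (padicValInt p b : ℤ) [ZMOD (n : ℤ)]) :
    Dense {q : ℚ_[p] | ∃ x y z w : ℤ,
      a * z ^ n + b * w ^ n ≠ 0 ∧
      q = ((a * x ^ n + b * y ^ n : ℤ) : ℚ_[p]) / ((a * z ^ n + b * w ^ n : ℤ) : ℚ_[p])} := by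
  rcases le_total (padicValInt p a) (padicValInt p b) with hle | hle
  · exact main_dense p n hn hgcd a b ha hb hle hval
  · have hd := main_dense p n hn hgcd b a hb ha hle hval.symm
    have hset : {q : ℚ_[p] | ∃ x y z w : ℤ, b * z ^ n + a * w ^ n ≠ 0 ∧
        q = ((b * x ^ n + a * y ^ n : ℤ) : ℚ_[p]) / ((b * z ^ n + a * w ^ n : ℤ) : ℚ_[p])} =
        {q : ℚ_[p] | ∃ x y z w : ℤ, a * z ^ n + b * w ^ n ≠ 0 ∧
        q = ((a * x ^ n + b * y ^ n : ℤ) : ℚ_[p]) / ((a * z ^ n + b * w ^ n : ℤ) : ℚ_[p])} := by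
      ext q
      constructor
      · rintro ⟨x, y, z, w, h1, h2⟩
        exact ⟨y, x, w, z, by rw [add_comm]; exact h1, by rw [add_comm (a*y^n), add_comm (a*w^n)]; exact h2⟩
      · rintro ⟨x, y, z, w, h1, h2⟩
        exact ⟨y, x, w, z, by rw [add_comm]; exact h1, by rw [add_comm (b*y^n), add_comm (b*w^n)]; exact h2⟩
    rw [← hset]
    exact hd
end

section
/- Let p be a prime and n ≥ 3 with gcd(n, p(p-1)) = 1. Let a_1,…,a_r be nonzero integers such that v_p(a_i) ≡ v_p(a_j) (mod n) for some i < j. Then the quotient set R(F) of F(x_1,…,x_r) = a_1 x_1^n + ⋯ + a_r x_r^n is dense in Q_p. -/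
lemma lemB (p : ℕ) [Fact p.Prime] (n : ℕ) (hgcd : Nat.gcd n (p * (p - 1)) = 1)
    (M : ℕ) (c : ℤ) (hc : ¬ (p:ℤ) ∣ c) : ∃ X : ℤ, (p:ℤ)^M ∣ X^n - c := by
  rcases Nat.eq_zero_or_pos M with hM | hM
  · exact ⟨0, by simp [hM]⟩
  have hp := (Fact.out : p.Prime)
  have hNpos : 0 < p ^ M := pow_pos hp.pos M
  haveI : NeZero (p ^ M) := ⟨hNpos.ne'⟩
  -- c is a unit in ZMod (p^M)
  have hcu : IsUnit ((c : ZMod (p ^ M))) := by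
    have hnd : ¬ p ∣ c.natAbs := by rwa [← Int.natCast_dvd] 
    have hco : c.natAbs.Coprime (p ^ M) :=
      Nat.Coprime.pow_right _ ((Nat.Prime.coprime_iff_not_dvd hp).2 hnd).symm
    have := (ZMod.isUnit_iff_coprime c.natAbs (p ^ M)).2 hco
    rcases Int.natAbs_eq c with h | h
    · rw [h, Int.cast_natCast] ; exact this
    · rw [h, Int.cast_neg, Int.cast_natCast] ; exact this.neg
  -- coprimality of n with the card of the unit group
  have hcard : (Nat.card (ZMod (p ^ M))ˣ).Coprime n := by
    rw [Nat.card_eq_fintype_card, ZMod.card_units_eq_totient, Nat.totient_prime_pow hp hM]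
    have h1 : Nat.Coprime n p := Nat.Coprime.coprime_dvd_right (dvd_mul_right _ _) hgcd
    have h2 : Nat.Coprime n (p - 1) := Nat.Coprime.coprime_dvd_right (dvd_mul_left _ _) hgcd
    exact Nat.Coprime.mul (Nat.Coprime.pow_left _ h1.symm) h2.symm
  obtain ⟨u, hu⟩ := hcu
  set g := (powCoprime hcard).symm u with hg
  have hgn : g ^ n = u := (powCoprime hcard).apply_symm_apply u
  refine ⟨((g : ZMod (p ^ M)).val : ℤ), ?_⟩
  have : ((((g : ZMod (p ^ M)).val : ℤ)^n - c : ℤ) : ZMod (p ^ M)) = 0 := by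
    push_cast
    rw [ZMod.natCast_val, ZMod.cast_id]
    rw [← hu, ← hgn]
    push_cast
    ring
  rwa [ZMod.intCast_zmod_eq_zero_iff_dvd, Nat.cast_pow] at this

lemma lemA (p : ℕ) [Fact p.Prime] (n : ℕ) (hgcd : Nat.gcd n (p * (p - 1)) = 1)
    (r0 : ℚ) (h1 : ‖((r0 : ℚ) : ℚ_[p])‖ = 1) (M : ℕ) (hM : 1 ≤ M) :
    ∃ X : ℤ, ‖((X : ℚ_[p]))^n - ((r0 : ℚ) : ℚ_[p])‖ ≤ (p:ℝ)^(-(M:ℤ)) := by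
  have hp := (Fact.out : p.Prime)
  have hplt : (1:ℝ) < p := by exact_mod_cast hp.one_lt
  have hpow_lt_one : (p:ℝ)^(-(M:ℤ)) < 1 := by
    apply zpow_lt_one_of_neg₀ hplt
    simp; omega
  have hpow_pos : (0:ℝ) < (p:ℝ)^(-(M:ℤ)) := by positivity
  -- p does not divide den
  have hden0 : (r0.den : ℤ) ≠ 0 := by exact_mod_cast r0.den_nz
  have hcastr0 : ((r0 : ℚ) : ℚ_[p]) = ((r0.num : ℤ) : ℚ_[p]) / ((r0.den : ℤ) : ℚ_[p]) := by
    rw [Rat.cast_def]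
    push_cast
    ring
  have hdennorm : ‖(((r0.den : ℤ)) : ℚ_[p])‖ = 1 := by
    by_contra h
    have hle := Padic.norm_int_le_one (p := p) (r0.den : ℤ)
    have hlt : ‖(((r0.den : ℤ)) : ℚ_[p])‖ < 1 := lt_of_le_of_ne hle h
    have hdvd : (p:ℤ) ∣ (r0.den : ℤ) := Padic.norm_intCast_lt_one_iff.1 hlt
    have hnumlt : ‖(((r0.num : ℤ)) : ℚ_[p])‖ < 1 := by
      have : ((r0.num : ℤ) : ℚ_[p]) = ((r0 : ℚ) : ℚ_[p]) * ((r0.den : ℤ) : ℚ_[p]) := by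
        rw [hcastr0]
        field_simp
      rw [this, norm_mul, h1, one_mul]
      exact hlt
    have hdvd2 : (p:ℤ) ∣ (r0.num : ℤ) := Padic.norm_intCast_lt_one_iff.1 hnumlt
    have hg : p ∣ Nat.gcd r0.num.natAbs r0.den :=
      Nat.dvd_gcd (Int.natCast_dvd.mp hdvd2) (Int.natCast_dvd_natCast.mp hdvd)
    rw [r0.reduced] at hg
    exact hp.ne_one (Nat.dvd_one.mp hg)
  have hdenne : (((r0.den : ℤ)) : ℚ_[p]) ≠ 0 := by
    intro h; rw [h] at hdennorm; simp at hdennorm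
  -- p does not divide den as integers
  have hpden : ¬ (p:ℤ) ∣ (r0.den : ℤ) := by
    intro h
    exact absurd (Padic.norm_intCast_lt_one_iff.2 h) (by rw [hdennorm]; norm_num)
  -- find integer c close to r0
  haveI : NeZero (p ^ M) := ⟨(pow_pos hp.pos M).ne'⟩
  have hdenu : IsUnit ((r0.den : ℤ) : ZMod (p ^ M)) := by
    have hnd : ¬ p ∣ r0.den := by
      intro h; exact hpden (Int.natCast_dvd_natCast.2 h)
    have hco : r0.den.Coprime (p ^ M) :=
      Nat.Coprime.pow_right _ ((Nat.Prime.coprime_iff_not_dvd hp).2 hnd).symm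
    have := (ZMod.isUnit_iff_coprime r0.den (p ^ M)).2 hco
    rwa [show (((r0.den : ℤ)) : ZMod (p^M)) = ((r0.den : ℕ) : ZMod (p^M)) by push_cast; ring]
  have hdenu' : IsUnit ((r0.den : ℕ) : ZMod (p ^ M)) := by
    rwa [show (((r0.den : ℤ)) : ZMod (p^M)) = ((r0.den : ℕ) : ZMod (p^M)) by push_cast; ring] at hdenu
  set c : ℤ := (((r0.num : ZMod (p ^ M)) * ((r0.den : ℕ) : ZMod (p ^ M))⁻¹).val : ℤ) with hc
  have hcd : ((c * (r0.den : ℤ) - r0.num : ℤ) : ZMod (p ^ M)) = 0 := by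
    push_cast [hc]
    rw [ZMod.natCast_val, ZMod.cast_id]
    have h2 : ((r0.den : ℕ) : ZMod (p^M))⁻¹ * ((r0.den : ℕ) : ZMod (p^M)) = 1 :=
      ZMod.inv_mul_of_unit _ hdenu'
    rw [mul_assoc, h2, mul_one]
    ring
  have hdvd : ((p:ℤ) ^ M) ∣ (c * (r0.den : ℤ) - r0.num) := by
    have := (ZMod.intCast_zmod_eq_zero_iff_dvd _ _).1 hcd
    rwa [Nat.cast_pow] at this
  have hclose : ‖(c : ℚ_[p]) - ((r0 : ℚ) : ℚ_[p])‖ ≤ (p:ℝ)^(-(M:ℤ)) := by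
    have heq : (c : ℚ_[p]) - ((r0 : ℚ) : ℚ_[p])
        = ((c * (r0.den : ℤ) - r0.num : ℤ) : ℚ_[p]) / ((r0.den : ℤ) : ℚ_[p]) := by
      rw [hcastr0]
      field_simp
      norm_cast
    rw [heq, norm_div, hdennorm, div_one]
    exact (Padic.norm_int_le_pow_iff_dvd _ _).2 hdvd
  -- c is not divisible by p
  have hcnorm : ‖(c : ℚ_[p])‖ = 1 := by
    have : (c : ℚ_[p]) = ((c : ℚ_[p]) - ((r0 : ℚ) : ℚ_[p])) + ((r0 : ℚ) : ℚ_[p]) := by ring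
    rw [this, Padic.add_eq_max_of_ne, h1, max_eq_right]
    · exact le_of_lt (lt_of_le_of_lt hclose hpow_lt_one)
    · rw [h1]; exact ne_of_lt (lt_of_le_of_lt hclose hpow_lt_one)
  have hcnd : ¬ (p:ℤ) ∣ c := by
    intro h
    exact absurd (Padic.norm_intCast_lt_one_iff.2 h) (by rw [hcnorm]; norm_num)
  obtain ⟨X, hX⟩ := lemB p n hgcd M c hcnd
  refine ⟨X, ?_⟩
  have hXn : ‖(X : ℚ_[p])^n - (c : ℚ_[p])‖ ≤ (p:ℝ)^(-(M:ℤ)) := by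
    have : (X : ℚ_[p])^n - (c : ℚ_[p]) = ((X^n - c : ℤ) : ℚ_[p]) := by push_cast; ring
    rw [this]
    exact (Padic.norm_int_le_pow_iff_dvd _ _).2 hX
  calc ‖(X : ℚ_[p])^n - ((r0 : ℚ) : ℚ_[p])‖
      = ‖((X : ℚ_[p])^n - (c : ℚ_[p])) + ((c : ℚ_[p]) - ((r0 : ℚ) : ℚ_[p]))‖ := by ring_nf
    _ ≤ max ‖(X : ℚ_[p])^n - (c : ℚ_[p])‖ ‖(c : ℚ_[p]) - ((r0 : ℚ) : ℚ_[p])‖ :=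
        Padic.nonarchimedean _ _
    _ ≤ (p:ℝ)^(-(M:ℤ)) := max_le hXn hclose

theorem stmt_7 (p : ℕ) [Fact p.Prime] (n : ℕ) (hn : 3 ≤ n)
    (hgcd : Nat.gcd n (p * (p - 1)) = 1) (r : ℕ) (a : Fin r → ℤ) (ha : ∀ i, a i ≠ 0)
    (hval : ∃ i j : Fin r, i < j ∧
      (padicValInt p (a i) : ℤ) ≡ (padicValInt p (a j) : ℤ) [ZMOD (n : ℤ)]) :
    Dense {q : ℚ_[p] | ∃ x y : Fin r → ℤ,
      (∑ i, a i * (y i) ^ n) ≠ 0 ∧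
      q = ((∑ i, a i * (x i) ^ n : ℤ) : ℚ_[p]) / ((∑ i, a i * (y i) ^ n : ℤ) : ℚ_[p])} := by
  have hp := (Fact.out : p.Prime)
  have hn0 : n ≠ 0 := by omega
  have hp0R : (0:ℝ) < p := by exact_mod_cast hp.pos
  have hp1R : (1:ℝ) < p := by exact_mod_cast hp.one_lt
  have hpinv_lt : ((p:ℝ))⁻¹ < 1 := inv_lt_one_of_one_lt₀ hp1R
  have hpinv_nonneg : (0:ℝ) ≤ (p:ℝ)⁻¹ := by positivity
  obtain ⟨i0, j0, hlt0, hmod⟩ := hval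
  obtain ⟨i, j, hij, hle, hdvd⟩ : ∃ i j : Fin r, i ≠ j ∧
      padicValInt p (a i) ≤ padicValInt p (a j) ∧
      (n:ℤ) ∣ ((padicValInt p (a j) : ℤ) - (padicValInt p (a i) : ℤ)) := by
    rcases le_total (padicValInt p (a i0)) (padicValInt p (a j0)) with h | h
    · exact ⟨i0, j0, hlt0.ne, h, hmod.dvd⟩
    · refine ⟨j0, i0, hlt0.ne', h, ?_⟩
      rw [show (padicValInt p (a i0) : ℤ) - (padicValInt p (a j0) : ℤ)
        = -((padicValInt p (a j0) : ℤ) - (padicValInt p (a i0) : ℤ)) by ring]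
      exact (hmod.dvd).neg_right
  set α := padicValInt p (a i) with hα
  set β := padicValInt p (a j) with hβ
  obtain ⟨K, hK⟩ := hdvd
  have hK0 : 0 ≤ K := by
    by_contra hK0
    push_neg at hK0
    nlinarith [hK, (show (0:ℤ) < n by exact_mod_cast Nat.pos_of_ne_zero hn0),
      (show (α:ℤ) ≤ (β:ℤ) by exact_mod_cast hle)]
  lift K to ℕ using hK0 with k hk
  -- norms of a i, a j
  have hain : ((a i : ℤ):ℚ_[p]) ≠ 0 := Int.cast_ne_zero.2 (ha i)
  have hajn : ((a j : ℤ):ℚ_[p]) ≠ 0 := Int.cast_ne_zero.2 (ha j)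
  have hpne : ((p:ℕ) : ℚ_[p]) ≠ 0 := by exact_mod_cast hp.ne_zero
  have hnai : ‖((a i : ℤ):ℚ_[p])‖ = (p:ℝ)^(-(α:ℤ)) := by
    rw [Padic.norm_eq_zpow_neg_valuation hain, Padic.valuation_intCast]
  have hnaj : ‖((a j : ℤ):ℚ_[p])‖ = (p:ℝ)^(-(β:ℤ)) := by
    rw [Padic.norm_eq_zpow_neg_valuation hajn, Padic.valuation_intCast]
  have hnain : ‖((a i : ℤ):ℚ_[p])‖ ≠ 0 := by rw [hnai]; positivity
  -- norm of the "w" element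
  have hppow : ∀ t : ℕ, ‖((p:ℕ):ℚ_[p])^t‖ = (p:ℝ)^(-(t:ℤ)) := by
    intro t
    rw [norm_pow, Padic.norm_p, inv_pow, ← zpow_natCast (p:ℝ), ← zpow_neg]
  have hw : ‖((a j : ℤ):ℚ_[p]) / (((a i : ℤ):ℚ_[p]) * ((p:ℕ):ℚ_[p])^(k*n))‖ = 1 := by
    rw [norm_div, norm_mul, hnai, hnaj, hppow, ← zpow_add₀ (ne_of_gt hp0R),
      ← zpow_sub₀ (ne_of_gt hp0R)]
    rw [show -(β:ℤ) - (-(α:ℤ) + -((k*n : ℕ):ℤ)) = 0 by push_cast; linear_combination -hK]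
    exact zpow_zero _
  rw [Metric.dense_iff]
  intro q₀ ε hε
  obtain ⟨ρ, hρ⟩ := Padic.rat_dense (p := p) q₀ (half_pos hε)
  set C := ‖((ρ:ℚ):ℚ_[p])‖ with hC
  have hC0 : 0 ≤ C := norm_nonneg _
  -- choose m
  obtain ⟨m, hm1, hm⟩ : ∃ m : ℕ, 1 ≤ m ∧ ((p:ℝ)⁻¹)^(n*m) * C < 1 := by
    obtain ⟨m1, hm1⟩ := exists_pow_lt_of_lt_one (show (0:ℝ) < 1/(C+1) by positivity) hpinv_lt
    refine ⟨m1 + 1, le_add_self, ?_⟩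
    have h1 : ((p:ℝ)⁻¹)^(n*(m1+1)) ≤ ((p:ℝ)⁻¹)^m1 := by
      apply pow_le_pow_of_le_one hpinv_nonneg (le_of_lt hpinv_lt)
      nlinarith [Nat.one_le_iff_ne_zero.2 hn0]
    calc ((p:ℝ)⁻¹)^(n*(m1+1)) * C ≤ (1/(C+1)) * C := by
          apply mul_le_mul (le_of_lt (lt_of_le_of_lt h1 hm1)) le_rfl hC0 (by positivity)
      _ < 1 := by rw [div_mul_eq_mul_div]; rw [div_lt_one (by positivity)]; linarith
  -- choose M
  obtain ⟨M, hM1, hM⟩ : ∃ M : ℕ, 1 ≤ M ∧ (p:ℝ)^((n*m : ℕ):ℤ) * ((p:ℝ)⁻¹)^M < ε/2 := by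
    have hpow_pos : (0:ℝ) < (p:ℝ)^((n*m : ℕ):ℤ) := by positivity
    obtain ⟨M1, hM1⟩ := exists_pow_lt_of_lt_one
      (show (0:ℝ) < (ε/2) / ((p:ℝ)^((n*m : ℕ):ℤ)) by positivity) hpinv_lt
    refine ⟨M1 + 1, le_add_self, ?_⟩
    have h1 : ((p:ℝ)⁻¹)^(M1+1) ≤ ((p:ℝ)⁻¹)^M1 :=
      pow_le_pow_of_le_one hpinv_nonneg (le_of_lt hpinv_lt) (by omega)
    calc (p:ℝ)^((n*m : ℕ):ℤ) * ((p:ℝ)⁻¹)^(M1+1)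
        ≤ (p:ℝ)^((n*m : ℕ):ℤ) * ((p:ℝ)⁻¹)^M1 := by
          exact mul_le_mul le_rfl h1 (by positivity) (le_of_lt hpow_pos)
      _ < (p:ℝ)^((n*m : ℕ):ℤ) * ((ε/2) / ((p:ℝ)^((n*m : ℕ):ℤ))) := by
          exact mul_lt_mul_of_pos_left hM1 hpow_pos
      _ = ε/2 := by field_simp
  -- the rational target for the n-th power
  set r0 : ℚ := ρ * (p:ℚ)^(n*m) - (a j : ℚ)/((a i : ℚ) * (p:ℚ)^(k*n)) with hr0
  have hr0cast : ((r0:ℚ):ℚ_[p]) = ((ρ:ℚ):ℚ_[p]) * ((p:ℕ):ℚ_[p])^(n*m)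
      - ((a j : ℤ):ℚ_[p])/(((a i : ℤ):ℚ_[p]) * ((p:ℕ):ℚ_[p])^(k*n)) := by
    rw [hr0]; push_cast; ring
  have hAlt : ‖((ρ:ℚ):ℚ_[p]) * ((p:ℕ):ℚ_[p])^(n*m)‖ < 1 := by
    rw [norm_mul, norm_pow, Padic.norm_p, ← hC, mul_comm]
    exact hm
  have hr0norm : ‖((r0:ℚ):ℚ_[p])‖ = 1 := by
    rw [hr0cast, sub_eq_add_neg, Padic.add_eq_max_of_ne, norm_neg, hw,
      max_eq_right (le_of_lt hAlt)]
    rw [norm_neg, hw]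
    exact ne_of_lt hAlt
  obtain ⟨X, hX⟩ := lemA p n hgcd r0 hr0norm M hM1
  -- witnesses
  set x' : Fin r → ℤ := fun t => if t = i then (p:ℤ)^k * X else if t = j then 1 else 0 with hx'
  set y' : Fin r → ℤ := fun t => if t = i then (p:ℤ)^(k+m) else 0 with hy'
  have hpZ : (p:ℤ) ≠ 0 := by exact_mod_cast hp.ne_zero
  have hsumx : ∑ t, a t * (x' t)^n = a i * ((p:ℤ)^k * X)^n + a j * 1^n := by
    rw [← Finset.sum_subset (Finset.subset_univ ({i, j} : Finset (Fin r)))]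
    · rw [Finset.sum_pair hij]
      simp [hx', hij, Ne.symm hij]
    · intro t _ ht
      simp only [Finset.mem_insert, Finset.mem_singleton, not_or] at ht
      simp [hx', ht.1, ht.2, zero_pow hn0]
  have hsumy : ∑ t, a t * (y' t)^n = a i * ((p:ℤ)^(k+m))^n := by
    rw [← Finset.sum_subset (Finset.subset_univ ({i} : Finset (Fin r)))]
    · rw [Finset.sum_singleton]
      simp [hy']
    · intro t _ ht
      simp only [Finset.mem_singleton] at ht
      simp [hy', ht, zero_pow hn0]
  set N : ℤ := a i * ((p:ℤ)^k * X)^n + a j * 1^n with hN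
  set D : ℤ := a i * ((p:ℤ)^(k+m))^n with hD
  have hD0 : D ≠ 0 := mul_ne_zero (ha i) (pow_ne_zero _ (pow_ne_zero _ hpZ))
  have hDcast : ((D:ℤ):ℚ_[p]) ≠ 0 := Int.cast_ne_zero.2 hD0
  set E : ℚ_[p] := ((N:ℤ):ℚ_[p]) / ((D:ℤ):ℚ_[p]) with hE
  -- key factorization
  have hfact : ((N:ℤ):ℚ_[p]) - ((ρ:ℚ):ℚ_[p]) * ((D:ℤ):ℚ_[p])
      = ((a i : ℤ):ℚ_[p]) * ((p:ℕ):ℚ_[p])^(k*n) * (((X:ℚ_[p]))^n - ((r0:ℚ):ℚ_[p])) := by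
    rw [hr0cast, hN, hD]
    push_cast
    field_simp
    ring
  have hEsub : E - ((ρ:ℚ):ℚ_[p]) = (((a i : ℤ):ℚ_[p]) * ((p:ℕ):ℚ_[p])^(k*n)
      * (((X:ℚ_[p]))^n - ((r0:ℚ):ℚ_[p]))) / ((D:ℤ):ℚ_[p]) := by
    rw [← hfact, hE]
    field_simp
  have hnormD : ‖((D:ℤ):ℚ_[p])‖ = ‖((a i : ℤ):ℚ_[p])‖ * ((p:ℝ)⁻¹)^((k+m)*n) := by
    have : ((D:ℤ):ℚ_[p]) = ((a i : ℤ):ℚ_[p]) * (((p:ℕ):ℚ_[p])^(k+m))^n := by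
      rw [hD]; push_cast; ring
    rw [this, norm_mul, norm_pow, norm_pow, Padic.norm_p, ← pow_mul, inv_pow]
  have hstep : ‖E - ((ρ:ℚ):ℚ_[p])‖
      = ‖((X:ℚ_[p]))^n - ((r0:ℚ):ℚ_[p])‖ * (p:ℝ)^(n*m) := by
    rw [hEsub, norm_div, norm_mul, norm_mul, norm_pow, Padic.norm_p, hnormD, inv_pow,
      show (k+m)*n = k*n + n*m by ring, pow_add]
    have h1 : ‖((a i : ℤ):ℚ_[p])‖ ≠ 0 := hnain
    have h2 : ((p:ℝ)⁻¹)^(k*n) ≠ 0 := by positivity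
    have h3 : (p:ℝ) ≠ 0 := ne_of_gt hp0R
    field_simp
    have h4 : (p:ℝ)^(n*k) * ((p:ℝ)⁻¹)^(n*k) = 1 := by rw [← mul_pow, mul_inv_cancel₀ h3, one_pow]
    have h5 : (p:ℝ)^(n*m) * ((p:ℝ)⁻¹)^(n*m) = 1 := by rw [← mul_pow, mul_inv_cancel₀ h3, one_pow]
    linear_combination (-((p:ℝ)^(n*m) * ((p:ℝ)⁻¹)^(n*m)) * ‖((X:ℚ_[p]))^n - ((r0:ℚ):ℚ_[p])‖) * h4
      - ‖((X:ℚ_[p]))^n - ((r0:ℚ):ℚ_[p])‖ * h5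
  have hMpow : (p:ℝ)^(-(M:ℤ)) = ((p:ℝ)⁻¹)^M := by
    rw [zpow_neg, ← inv_zpow, zpow_natCast]
  have hEclose : ‖E - ((ρ:ℚ):ℚ_[p])‖ < ε/2 := by
    rw [hstep]
    calc ‖((X:ℚ_[p]))^n - ((r0:ℚ):ℚ_[p])‖ * (p:ℝ)^(n*m)
        ≤ ((p:ℝ)⁻¹)^M * (p:ℝ)^(n*m) := by
          apply mul_le_mul _ le_rfl (by positivity) (by positivity)
          rw [← hMpow]; exact hX
      _ = (p:ℝ)^((n*m : ℕ):ℤ) * ((p:ℝ)⁻¹)^M := by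
          rw [zpow_natCast]; ring
      _ < ε/2 := hM
  refine ⟨E, Metric.mem_ball.2 ?_, ⟨x', y', ?_, ?_⟩⟩
  · calc dist E q₀ ≤ dist E ((ρ:ℚ):ℚ_[p]) + dist ((ρ:ℚ):ℚ_[p]) q₀ := dist_triangle _ _ _
      _ < ε/2 + ε/2 := by
          apply add_lt_add
          · rw [dist_eq_norm]; exact hEclose
          · rw [dist_eq_norm, norm_sub_rev]; exact hρ
      _ = ε := add_halves ε
  · rw [hsumy]; exact hD0
  · rw [hsumx, hsumy]
end

section
/- Let p be a prime and n ≥ 3 with gcd(n, p(p-1)) = 1. Let a_1,…,a_r be nonzero integers with r > n/2 and v_p(a_i) ≢ v_p(a_j) (mod n) for all i < j. Then the quotient set R(F) of F(x_1,…,x_r) = a_1 x_1^n + ⋯ + a_r x_r^n is dense in Q_p. -/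
open Polynomial

private lemma padic_nth_root {p n : ℕ} [Fact p.Prime] (hn : n ≠ 0)
    (hpn : ¬ p ∣ n) (hcop : Nat.Coprime n (p - 1)) (u : ℤ_[p]) (hu : ‖u‖ = 1) :
    ∃ s : ℤ_[p], s ^ n = u := by
  classical
  have hmem_iff : ∀ x : ℤ_[p], x ∈ IsLocalRing.maximalIdeal ℤ_[p] ↔ ‖x‖ < 1 := by
    intro x
    rw [PadicInt.maximalIdeal_eq_span_p, Ideal.mem_span_singleton, ← PadicInt.norm_lt_one_iff_dvd]
  have hu0 : PadicInt.toZMod u ≠ 0 := by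
    intro h
    have : u ∈ IsLocalRing.maximalIdeal ℤ_[p] := by
      rw [← PadicInt.ker_toZMod]; exact h
    rw [hmem_iff] at this
    rw [hu] at this; exact lt_irrefl 1 this
  have hcard : (Nat.card (ZMod p)ˣ).Coprime n := by
    rw [Nat.card_eq_fintype_card, ZMod.card_units]
    exact hcop.symm
  obtain ⟨b, hb⟩ := (powCoprime hcard).surjective (hu0.isUnit.unit)
  have hbn : (b : ZMod p) ^ n = PadicInt.toZMod u := by
    have := congrArg (Units.val) hb
    simpa [powCoprime] using this
  set a : ℤ_[p] := ((b : ZMod p).val : ℤ_[p]) with ha_def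
  have hta : PadicInt.toZMod a = (b : ZMod p) := by
    rw [ha_def, map_natCast, ZMod.natCast_val, ZMod.cast_id]
  set F : Polynomial ℤ_[p] := X ^ n - C u with hF
  have hFa : F.eval a = a ^ n - u := by simp [hF]
  have hFa_lt : ‖F.eval a‖ < 1 := by
    rw [hFa, ← hmem_iff, ← PadicInt.ker_toZMod]
    show PadicInt.toZMod (a ^ n - u) = 0
    rw [map_sub, map_pow, hta, hbn, sub_self]
  have hFderiv : F.derivative = C ((n : ℤ_[p])) * X ^ (n - 1) := by
    rw [hF, derivative_sub, derivative_X_pow, derivative_C, sub_zero]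
  have hna : ‖(n : ℤ_[p])‖ = 1 := by
    refine le_antisymm (PadicInt.norm_le_one _) ?_
    by_contra h
    push_neg at h
    have h2 : ‖((n : ℤ) : ℤ_[p])‖ < 1 := by push_cast; exact h
    rw [PadicInt.norm_int_lt_one_iff_dvd] at h2
    exact hpn (Int.ofNat_dvd.mp h2)
  have haa : ‖a‖ = 1 := by
    refine le_antisymm (PadicInt.norm_le_one _) ?_
    by_contra h
    push_neg at h
    have : a ∈ IsLocalRing.maximalIdeal ℤ_[p] := (hmem_iff a).mpr h
    rw [← PadicInt.ker_toZMod] at this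
    have : PadicInt.toZMod a = 0 := this
    rw [hta] at this
    exact b.ne_zero this
  have hFd : ‖F.derivative.eval a‖ = 1 := by
    rw [hFderiv]
    simp only [eval_mul, eval_C, eval_pow, eval_X]
    rw [norm_mul, norm_pow, hna, haa, one_pow, one_mul]
  have hnorm : ‖F.eval a‖ < ‖F.derivative.eval a‖ ^ 2 := by
    rw [hFd]; simpa using hFa_lt
  obtain ⟨z, hz, -⟩ := hensels_lemma hnorm
  refine ⟨z, ?_⟩
  have hz2 : z ^ n - u = 0 := by
    rw [hF] at hz; simpa using hz
  exact sub_eq_zero.mp hz2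

private lemma padic_val_div {p : ℕ} [Fact p.Prime] {x y : ℚ_[p]} (hx : x ≠ 0) (hy : y ≠ 0) :
    (x / y).valuation = x.valuation - y.valuation := by
  have h : x / y * y = x := div_mul_cancel₀ x hy
  have h2 := Padic.valuation_mul (div_ne_zero hx hy) hy
  rw [h] at h2
  omega

private lemma padic_val_pow {p : ℕ} [Fact p.Prime] {x : ℚ_[p]} (hx : x ≠ 0) (k : ℕ) :
    (x ^ k).valuation = k * x.valuation := by
  induction k with
  | zero => simp [Padic.valuation_one]
  | succ k ih =>
    rw [pow_succ, Padic.valuation_mul (pow_ne_zero _ hx) hx, ih]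
    push_cast; ring

private lemma pigeon {n r : ℕ} (hn : n ≠ 0) (hr : 2 * r > n) (d : Fin r → ZMod n)
    (hd : Function.Injective d) (c : ZMod n) : ∃ i j, d i - d j = c := by
  haveI : NeZero n := ⟨hn⟩
  classical
  set A : Finset (ZMod n) := Finset.image d Finset.univ with hA_def
  set B : Finset (ZMod n) := Finset.image (fun i => c + d i) Finset.univ with hB_def
  have hA : A.card = r := by
    rw [hA_def, Finset.card_image_of_injective _ hd, Finset.card_univ, Fintype.card_fin]
  have hdB : Function.Injective (fun i => c + d i) := by
    intro i j h
    exact hd (by simpa using h)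
  have hB : B.card = r := by
    rw [hB_def, Finset.card_image_of_injective _ hdB, Finset.card_univ, Fintype.card_fin]
  have hnd : ¬ Disjoint A B := by
    intro h
    have hcard := Finset.card_union_of_disjoint h
    have hle : (A ∪ B).card ≤ Fintype.card (ZMod n) := Finset.card_le_univ _
    rw [ZMod.card] at hle
    omega
  obtain ⟨x, hx⟩ := Finset.not_disjoint_iff.mp hnd
  obtain ⟨hxA, hxB⟩ := hx
  obtain ⟨i, -, hi⟩ := Finset.mem_image.mp hxA
  obtain ⟨j, -, hj⟩ := Finset.mem_image.mp hxB
  refine ⟨i, j, ?_⟩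
  rw [hi, ← hj]
  ring

private lemma sum_single_form {r n : ℕ} (hn : n ≠ 0) (a : Fin r → ℤ) (i : Fin r) (c : ℤ) :
    (∑ t, a t * (if t = i then c else 0) ^ n) = a i * c ^ n := by
  classical
  rw [Finset.sum_eq_single i]
  · simp
  · intro t _ ht; simp [ht, zero_pow hn]
  · simp

theorem stmt_9 (p : ℕ) [Fact p.Prime] (n : ℕ) (hn : 3 ≤ n)
    (hgcd : Nat.gcd n (p * (p - 1)) = 1) (r : ℕ) (hr : 2 * r > n)
    (a : Fin r → ℤ) (ha : ∀ i, a i ≠ 0)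
    (hval : ∀ i j : Fin r, i < j →
      ¬ ((padicValInt p (a i) : ℤ) ≡ (padicValInt p (a j) : ℤ) [ZMOD (n : ℤ)])) :
    Dense {q : ℚ_[p] | ∃ x y : Fin r → ℤ,
      (∑ i, a i * (y i) ^ n) ≠ 0 ∧
      q = ((∑ i, a i * (x i) ^ n : ℤ) : ℚ_[p]) / ((∑ i, a i * (y i) ^ n : ℤ) : ℚ_[p])} := by
  classical
  have hp : p.Prime := Fact.out
  have hn0 : n ≠ 0 := by omega
  have hr0 : 0 < r := by omega
  have hpn : ¬ p ∣ n := by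
    intro h
    have h1 : p ∣ p * (p - 1) := Dvd.intro _ rfl
    have h2 := Nat.dvd_gcd h h1
    rw [hgcd] at h2
    have := Nat.le_of_dvd one_pos h2
    have := hp.two_le
    omega
  have hcop : Nat.Coprime n (p - 1) :=
    Nat.Coprime.coprime_dvd_right (dvd_mul_left (p - 1) p) hgcd
  have hP : ((p : ℚ_[p])) ≠ 0 := by
    exact_mod_cast (Nat.cast_ne_zero (R := ℚ_[p])).mpr hp.ne_zero
  rw [Metric.dense_iff]
  intro q ε hε
  by_cases hq : ‖q‖ < ε
  · -- approximate by p^(m*n)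
    have hpinv : ((p:ℝ))⁻¹ < 1 := inv_lt_one_of_one_lt₀ (by exact_mod_cast hp.one_lt)
    obtain ⟨m, hm⟩ := exists_pow_lt_of_lt_one hε hpinv
    set i0 : Fin r := ⟨0, hr0⟩
    set x : Fin r → ℤ := fun t => if t = i0 then (p:ℤ)^m else 0 with hx_def
    set y : Fin r → ℤ := fun t => if t = i0 then 1 else 0 with hy_def
    have hFx : (∑ t, a t * (x t)^n) = a i0 * ((p:ℤ)^m)^n := sum_single_form hn0 a i0 _
    have hFy : (∑ t, a t * (y t)^n) = a i0 * 1^n := sum_single_form hn0 a i0 1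
    have hFy0 : (∑ t, a t * (y t)^n) ≠ 0 := by
      rw [hFy]; simpa using ha i0
    refine ⟨_, Set.mem_inter ?_ ⟨x, y, hFy0, rfl⟩⟩
    rw [Metric.mem_ball, dist_eq_norm]
    have hai : ((a i0 : ℤ) : ℚ_[p]) ≠ 0 := Int.cast_ne_zero.mpr (ha i0)
    have hz : ((∑ t, a t * (x t)^n : ℤ) : ℚ_[p]) / ((∑ t, a t * (y t)^n : ℤ) : ℚ_[p])
        = (p:ℚ_[p])^(m*n) := by
      rw [hFx, hFy]
      push_cast
      rw [pow_mul]
      field_simp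
      simp
    rw [hz]
    have hnorm : ‖(p:ℚ_[p])^(m*n) - q‖ ≤ max ‖(p:ℚ_[p])^(m*n)‖ ‖q‖ := by
      have h := Padic.nonarchimedean ((p:ℚ_[p])^(m*n)) (-q)
      simpa [sub_eq_add_neg] using h
    have hpow : ‖(p:ℚ_[p])^(m*n)‖ < ε := by
      rw [norm_pow, Padic.norm_p]
      calc ((p:ℝ))⁻¹ ^ (m*n) ≤ (p:ℝ)⁻¹ ^ m :=
            pow_le_pow_of_le_one (by positivity) (le_of_lt hpinv)
              (Nat.le_mul_of_pos_right m (by omega))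
        _ < ε := hm
    exact lt_of_le_of_lt hnorm (max_lt hpow hq)
  · push_neg at hq
    have hq0 : q ≠ 0 := by
      intro h; rw [h, norm_zero] at hq; linarith
    set m : ℤ := q.valuation with hm_def
    set d : Fin r → ZMod n := fun i => ((padicValInt p (a i) : ℤ) : ZMod n) with hd_def
    have hd : Function.Injective d := by
      intro i j hij
      by_contra hne
      rcases Ne.lt_or_gt hne with h | h
      · exact hval i j h ((ZMod.intCast_eq_intCast_iff _ _ _).mp hij)
      · exact hval j i h ((ZMod.intCast_eq_intCast_iff _ _ _).mp hij.symm)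
    obtain ⟨i, j, hij⟩ := pigeon hn0 hr d hd ((m : ZMod n))
    have hmod : (padicValInt p (a i) : ℤ) ≡ m + (padicValInt p (a j) : ℤ) [ZMOD (n:ℤ)] := by
      rw [← ZMod.intCast_eq_intCast_iff]
      have hij2 : d i = (m : ZMod n) + d j := sub_eq_iff_eq_add.mp hij
      rw [hd_def] at hij2
      push_cast at hij2 ⊢
      linear_combination hij2
    have hdvd := Int.ModEq.dvd hmod
    obtain ⟨t, ht⟩ := hdvd
    set k : ℕ := t.toNat with hk_def
    set l : ℕ := (-t).toNat with hl_def
    have hkl : m = (padicValInt p (a i) : ℤ) + (k:ℤ) * n - (padicValInt p (a j) : ℤ) - (l:ℤ) * n := by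
      have hk2 : (k:ℤ) - (l:ℤ) = t := by omega
      have : m + (padicValInt p (a j) : ℤ) - (padicValInt p (a i) : ℤ) = n * t := by
        linarith [ht]
      rw [← hk2] at this
      ring_nf at this ⊢
      linarith
    set A : ℚ_[p] := ((a i : ℤ) : ℚ_[p]) with hA_def
    set B : ℚ_[p] := ((a j : ℤ) : ℚ_[p]) with hB_def
    have hA0 : A ≠ 0 := Int.cast_ne_zero.mpr (ha i)
    have hB0 : B ≠ 0 := Int.cast_ne_zero.mpr (ha j)
    have hPk : ((p:ℚ_[p]))^(k*n) ≠ 0 := pow_ne_zero _ hP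
    have hPl : ((p:ℚ_[p]))^(l*n) ≠ 0 := pow_ne_zero _ hP
    set w : ℚ_[p] := q * B * (p:ℚ_[p])^(l*n) / (A * (p:ℚ_[p])^(k*n)) with hw_def
    have hw0 : w ≠ 0 :=
      div_ne_zero (mul_ne_zero (mul_ne_zero hq0 hB0) hPl) (mul_ne_zero hA0 hPk)
    have hvalA : A.valuation = (padicValInt p (a i) : ℤ) := Padic.valuation_intCast _
    have hvalB : B.valuation = (padicValInt p (a j) : ℤ) := Padic.valuation_intCast _
    have hvalw : w.valuation = 0 := by
      rw [hw_def, padic_val_div (mul_ne_zero (mul_ne_zero hq0 hB0) hPl) (mul_ne_zero hA0 hPk),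
        Padic.valuation_mul (mul_ne_zero hq0 hB0) hPl,
        Padic.valuation_mul hq0 hB0,
        Padic.valuation_mul hA0 hPk,
        padic_val_pow hP, padic_val_pow hP, Padic.valuation_p,
        hvalA, hvalB, ← hm_def]
      push_cast
      omega
    have hwnorm : ‖w‖ = 1 := by
      rw [Padic.norm_eq_zpow_neg_valuation hw0, hvalw]
      simp
    set u : ℤ_[p] := ⟨w, le_of_eq hwnorm⟩ with hu_def
    have hu : ‖u‖ = 1 := hwnorm
    obtain ⟨s, hs⟩ := padic_nth_root hn0 hpn hcop u hu
    have hsn : ((s : ℚ_[p]))^n = w := by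
      have h2 := congrArg (fun z : ℤ_[p] => (z : ℚ_[p])) hs
      push_cast at h2
      exact h2
    have hq_eq : q = A * (p:ℚ_[p])^(k*n) * ((s:ℚ_[p]))^n / (B * (p:ℚ_[p])^(l*n)) := by
      rw [hsn, hw_def]
      field_simp
    set C : ℝ := ‖A * (p:ℚ_[p])^(k*n) / (B * (p:ℚ_[p])^(l*n))‖ with hC_def
    have hC0 : 0 < C := by
      rw [hC_def]
      exact norm_pos_iff.mpr (div_ne_zero (mul_ne_zero hA0 hPk) (mul_ne_zero hB0 hPl))
    obtain ⟨s', hs'⟩ := PadicInt.denseRange_intCast.exists_dist_lt s (div_pos hε hC0)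
    set x : Fin r → ℤ := fun t => if t = i then (p:ℤ)^k * s' else 0 with hx_def
    set y : Fin r → ℤ := fun t => if t = j then (p:ℤ)^l else 0 with hy_def
    have hFx : (∑ t, a t * (x t)^n) = a i * ((p:ℤ)^k * s')^n := sum_single_form hn0 a i _
    have hFy : (∑ t, a t * (y t)^n) = a j * ((p:ℤ)^l)^n := sum_single_form hn0 a j _
    have hFy0 : (∑ t, a t * (y t)^n) ≠ 0 := by
      rw [hFy]
      exact mul_ne_zero (ha j) (pow_ne_zero _ (pow_ne_zero _ (by exact_mod_cast hp.ne_zero)))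
    refine ⟨_, Set.mem_inter ?_ ⟨x, y, hFy0, rfl⟩⟩
    rw [Metric.mem_ball, dist_eq_norm]
    have hzval : ((∑ t, a t * (x t)^n : ℤ) : ℚ_[p]) / ((∑ t, a t * (y t)^n : ℤ) : ℚ_[p])
        = A * (p:ℚ_[p])^(k*n) * (((s':ℤ) : ℚ_[p]))^n / (B * (p:ℚ_[p])^(l*n)) := by
      rw [hFx, hFy, hA_def, hB_def]
      push_cast
      rw [mul_pow, ← pow_mul, ← pow_mul]
      ring
    rw [hzval]
    have hdiff : A * (p:ℚ_[p])^(k*n) * (((s':ℤ) : ℚ_[p]))^n / (B * (p:ℚ_[p])^(l*n)) - q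
        = (A * (p:ℚ_[p])^(k*n) / (B * (p:ℚ_[p])^(l*n))) * ((((s':ℤ) : ℚ_[p]))^n - ((s:ℚ_[p]))^n) := by
      rw [hq_eq]
      field_simp
    rw [hdiff, norm_mul, ← hC_def]
    have hbound : ‖(((s':ℤ) : ℚ_[p]))^n - ((s:ℚ_[p]))^n‖ < ε / C := by
      obtain ⟨c, hc⟩ := sub_dvd_pow_sub_pow ((s' : ℤ_[p])) s n
      have hcast : (((s':ℤ) : ℚ_[p]))^n - ((s:ℚ_[p]))^n
          = ((((s' : ℤ_[p]))^n - s^n : ℤ_[p]) : ℚ_[p]) := by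
        push_cast
        ring
      rw [hcast, hc]
      have hnn : ‖((((s' : ℤ_[p]) - s) * c : ℤ_[p]) : ℚ_[p])‖ = ‖((s' : ℤ_[p]) - s) * c‖ :=
        PadicInt.norm_def.symm
      rw [hnn, norm_mul]
      calc ‖(s' : ℤ_[p]) - s‖ * ‖c‖ ≤ ‖(s' : ℤ_[p]) - s‖ * 1 := by
            exact mul_le_mul_of_nonneg_left (PadicInt.norm_le_one c) (norm_nonneg _)
        _ = ‖(s' : ℤ_[p]) - s‖ := mul_one _
        _ < ε / C := by rw [← dist_eq_norm, dist_comm]; exact hs'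
    calc C * ‖(((s':ℤ) : ℚ_[p]))^n - ((s:ℚ_[p]))^n‖ < C * (ε / C) :=
          mul_lt_mul_of_pos_left hbound hC0
      _ = ε := by field_simp
end

section
/- Let p be a prime, n ≥ 3, m = ⌊n/2⌋, and F_0(x_1,…,x_m) = x_1^n + p x_2^n + p^2 x_3^n + ⋯ + p^{m-1} x_m^n. Then for every nonzero x ∈ Z^m, the residue of v_p(F_0(x)) modulo n lies in {0, 1, …, m-1}; consequently R(F_0) is not dense in Q_p. -/
theorem key_val (p : ℕ) [Fact p.Prime] (n : ℕ) (hn : 3 ≤ n)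
    (x : Fin (n / 2) → ℤ) (hx : x ≠ 0) :
    ∃ i : Fin (n / 2), x i ≠ 0 ∧
      (∑ i, (p : ℤ) ^ i.1 * (x i) ^ n) ≠ 0 ∧
      padicValInt p (∑ i, (p : ℤ) ^ i.1 * (x i) ^ n) = i.1 + n * padicValInt p (x i) := by
  classical
  have hp : (p : ℤ) ≠ 0 := by exact_mod_cast (Fact.out : p.Prime).ne_zero
  set f : Fin (n / 2) → ℕ := fun i => i.1 + n * padicValInt p (x i) with hf
  set T : Finset (Fin (n / 2)) := Finset.univ.filter (fun i => x i ≠ 0) with hT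
  have hTne : T.Nonempty := by
    obtain ⟨i, hi⟩ := Function.ne_iff.mp hx
    refine ⟨i, ?_⟩
    simp only [hT, Finset.mem_filter, Finset.mem_univ, true_and]
    simpa using hi
  obtain ⟨i0, hi0T, hmin⟩ := T.exists_min_image f hTne
  have hxi0 : x i0 ≠ 0 := by simpa [hT] using hi0T
  set v := f i0 with hv
  have hmod : ∀ j, f j % n = j.1 := by
    intro j
    have : j.1 < n := lt_of_lt_of_le j.2 (Nat.div_le_self n 2)
    simp [hf, Nat.add_mul_mod_self_left, Nat.mod_eq_of_lt this]
  have hdvd : ∀ j, (p : ℤ) ^ f j ∣ (p : ℤ) ^ j.1 * (x j) ^ n := by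
    intro j
    show (p : ℤ) ^ (j.1 + n * padicValInt p (x j)) ∣ _
    rw [mul_comm n, pow_add, pow_mul]
    exact mul_dvd_mul dvd_rfl (pow_dvd_pow_of_dvd (padicValInt_dvd _) n)
  -- valuation of term i0 is exactly v
  have hterm0 : padicValInt p ((p : ℤ) ^ i0.1 * (x i0) ^ n) = v := by
    rw [padicValInt.mul (pow_ne_zero _ hp) (pow_ne_zero _ hxi0)]
    have h1 : padicValInt p ((p : ℤ) ^ i0.1) = i0.1 := by
      have h : ((p : ℤ)) ^ i0.1 = ((p ^ i0.1 : ℕ) : ℤ) := by push_cast; ring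
      rw [h, padicValInt.of_nat, padicValNat.prime_pow]
    have h2 : padicValInt p ((x i0) ^ n) = n * padicValInt p (x i0) := by
      unfold padicValInt
      rw [Int.natAbs_pow, padicValNat.pow _ n]
    rw [h1, h2]
  have hterm0ne : (p : ℤ) ^ i0.1 * (x i0) ^ n ≠ 0 :=
    mul_ne_zero (pow_ne_zero _ hp) (pow_ne_zero _ hxi0)
  have hndvd0 : ¬ (p : ℤ) ^ (v + 1) ∣ (p : ℤ) ^ i0.1 * (x i0) ^ n := by
    rw [padicValInt_dvd_iff]
    push_neg
    exact ⟨hterm0ne, by rw [hterm0]; exact Nat.lt_succ_self v⟩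
  -- the rest is divisible by p^(v+1)
  have hrest : (p : ℤ) ^ (v + 1) ∣ ∑ j ∈ Finset.univ.erase i0, (p : ℤ) ^ j.1 * (x j) ^ n := by
    refine Finset.dvd_sum ?_
    intro j hj
    rcases eq_or_ne (x j) 0 with h0 | h0
    · rw [h0, zero_pow (by omega), mul_zero]
      exact dvd_zero _
    · have hjT : j ∈ T := by simp [hT, h0]
      have hge : v ≤ f j := hmin j hjT
      have hne : f j ≠ v := by
        intro he
        have := hmod j
        rw [he] at this
        rw [hmod i0] at this
        exact (Finset.mem_erase.mp hj).1 (Fin.ext this.symm)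
      exact dvd_trans (pow_dvd_pow _ (by omega)) (hdvd j)
  have hsplit : (∑ i, (p : ℤ) ^ i.1 * (x i) ^ n)
      = (p : ℤ) ^ i0.1 * (x i0) ^ n + ∑ j ∈ Finset.univ.erase i0, (p : ℤ) ^ j.1 * (x j) ^ n :=
    (Finset.add_sum_erase _ _ (Finset.mem_univ i0)).symm
  have hndvdS : ¬ (p : ℤ) ^ (v + 1) ∣ (∑ i, (p : ℤ) ^ i.1 * (x i) ^ n) := by
    intro h
    apply hndvd0
    have := dvd_sub h hrest
    rwa [hsplit, add_sub_cancel_right] at this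
  have hSne : (∑ i, (p : ℤ) ^ i.1 * (x i) ^ n) ≠ 0 := by
    intro h; exact hndvdS (h ▸ dvd_zero _)
  have hdvdS : (p : ℤ) ^ v ∣ (∑ i, (p : ℤ) ^ i.1 * (x i) ^ n) := by
    rw [hsplit]
    exact dvd_add (hterm0 ▸ padicValInt_dvd _)
      (dvd_trans (pow_dvd_pow _ (Nat.le_succ v)) hrest)
  refine ⟨i0, hxi0, hSne, ?_⟩
  have h1 : v ≤ padicValInt p (∑ i, (p : ℤ) ^ i.1 * (x i) ^ n) :=
    ((padicValInt_dvd_iff _ _).mp hdvdS).resolve_left hSne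
  have h2 : ¬ (v + 1 ≤ padicValInt p (∑ i, (p : ℤ) ^ i.1 * (x i) ^ n)) := by
    intro h
    exact hndvdS ((padicValInt_dvd_iff _ _).mpr (Or.inr h))
  have hv' : v = i0.1 + n * padicValInt p (x i0) := rfl
  omega

theorem stmt_11 (p : ℕ) [Fact p.Prime] (n : ℕ) (hn : 3 ≤ n) :
    (∀ x : Fin (n / 2) → ℤ, x ≠ 0 →
      padicValInt p (∑ i, (p : ℤ) ^ i.1 * (x i) ^ n) % n < n / 2) ∧
    ¬ Dense {q : ℚ_[p] | ∃ x y : Fin (n / 2) → ℤ,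
      (∑ i, (p : ℤ) ^ i.1 * (y i) ^ n) ≠ 0 ∧
      q = ((∑ i, (p : ℤ) ^ i.1 * (x i) ^ n : ℤ) : ℚ_[p]) /
          ((∑ i, (p : ℤ) ^ i.1 * (y i) ^ n : ℤ) : ℚ_[p])} := by
  have hp1 : 1 < (p : ℝ) := by exact_mod_cast (Fact.out : p.Prime).one_lt
  have hmodlt : ∀ x : Fin (n / 2) → ℤ, x ≠ 0 →
      padicValInt p (∑ i, (p : ℤ) ^ i.1 * (x i) ^ n) % n < n / 2 := by
    intro x hx
    obtain ⟨i, -, -, hval⟩ := key_val p n hn x hx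
    rw [hval, Nat.add_mul_mod_self_left, Nat.mod_eq_of_lt (by omega : i.1 < n)]
    exact i.2
  refine ⟨hmodlt, ?_⟩
  intro hD
  set m := n / 2 with hm
  set x0 : ℚ_[p] := (p : ℚ_[p]) ^ m with hx0
  have hpQ : (p : ℚ_[p]) ≠ 0 := by
    exact_mod_cast (Nat.cast_ne_zero (R := ℚ_[p])).mpr (Fact.out : p.Prime).ne_zero
  have hx0ne : x0 ≠ 0 := pow_ne_zero _ hpQ
  have hx0norm : ‖x0‖ = (p : ℝ) ^ (-(m : ℤ)) := by
    rw [hx0, norm_pow, Padic.norm_p]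
    rw [inv_pow, ← zpow_natCast, ← zpow_neg]
  have hε : (0 : ℝ) < ‖x0‖ := norm_pos_iff.mpr hx0ne
  obtain ⟨b, hbS, hdist⟩ := Metric.mem_closure_iff.mp (hD x0) ‖x0‖ hε
  rw [dist_eq_norm] at hdist
  -- ‖b‖ = ‖x0‖
  have hbnorm : ‖b‖ = ‖x0‖ := by
    by_contra hne
    have : ‖x0 - b‖ = max ‖x0‖ ‖b‖ := by
      rw [sub_eq_add_neg, Padic.add_eq_max_of_ne
        (by rw [norm_neg]; exact fun h => hne h.symm), norm_neg]
    rw [this] at hdist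
    exact absurd hdist (not_lt.mpr (le_max_left _ _))
  obtain ⟨x, y, hyne, hbeq⟩ := hbS
  set A : ℤ := ∑ i, (p : ℤ) ^ i.1 * (x i) ^ n with hA
  set B : ℤ := ∑ i, (p : ℤ) ^ i.1 * (y i) ^ n with hB
  have hbne : b ≠ 0 := by
    intro h
    rw [h, norm_zero] at hbnorm
    exact hε.ne' hbnorm.symm
  have hBQ : ((B : ℚ_[p])) ≠ 0 := Int.cast_ne_zero.mpr hyne
  have hAne : A ≠ 0 := by
    intro h
    apply hbne
    rw [hbeq, h, Int.cast_zero, zero_div]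
  have hAQ : ((A : ℚ_[p])) ≠ 0 := Int.cast_ne_zero.mpr hAne
  -- norms of A and B
  have hnormA : ‖(A : ℚ_[p])‖ = (p : ℝ) ^ (-(padicValInt p A : ℤ)) := by
    rw [Padic.norm_eq_zpow_neg_valuation hAQ, Padic.valuation_intCast]
  have hnormB : ‖(B : ℚ_[p])‖ = (p : ℝ) ^ (-(padicValInt p B : ℤ)) := by
    rw [Padic.norm_eq_zpow_neg_valuation hBQ, Padic.valuation_intCast]
  have hbnorm2 : ‖b‖ = (p : ℝ) ^ ((padicValInt p B : ℤ) - (padicValInt p A : ℤ)) := by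
    rw [hbeq, norm_div, hnormA, hnormB, ← zpow_sub₀ (by positivity)]
    congr 1
    ring
  have hkey : (padicValInt p B : ℤ) - (padicValInt p A : ℤ) = -(m : ℤ) := by
    have := hbnorm2.symm.trans (hbnorm.trans hx0norm)
    exact (zpow_right_strictMono₀ hp1).injective this
  -- x and y are nonzero vectors
  have hxne : x ≠ 0 := by
    intro h
    apply hAne
    rw [hA, h]
    apply Finset.sum_eq_zero
    intro i _
    simp [zero_pow (by omega : n ≠ 0)]
  have hyne' : y ≠ 0 := by
    intro h
    apply hyne
    rw [hB, h]
    apply Finset.sum_eq_zero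
    intro i _
    simp [zero_pow (by omega : n ≠ 0)]
  have ha := hmodlt x hxne
  have hb := hmodlt y hyne'
  rw [← hA] at ha
  rw [← hB] at hb
  set a' := padicValInt p A
  set b' := padicValInt p B
  have haeq : a' = b' + m := by omega
  have : a' % n = b' % n + m := by
    rw [haeq, Nat.add_mod, Nat.mod_eq_of_lt (by omega : m < n),
      Nat.mod_eq_of_lt (by omega : b' % n + m < n)]
  omega
end

section
/- Let p be a prime and F a primitive integral form of degree n ≥ 2 in r variables which is anisotropic modulo p. Then the quotient set R(F) = { F(x)/F(y) : x, y ∈ Z^r, F(y) ≠ 0 } is not dense in Q_p. -/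
open MvPolynomial

lemma eval_mul_pow_aux {r n : ℕ} {F : MvPolynomial (Fin r) ℤ} (hhom : F.IsHomogeneous n)
    (c : ℤ) (x : Fin r → ℤ) :
    MvPolynomial.eval (fun i => c * x i) F = c ^ n * MvPolynomial.eval x F := by
  rw [MvPolynomial.eval_eq, MvPolynomial.eval_eq, Finset.mul_sum]
  apply Finset.sum_congr rfl
  intro d hd
  have hdeg : (∑ i ∈ d.support, d i) = n := by
    have := hhom (MvPolynomial.mem_support_iff.mp hd)
    simpa [Finsupp.weight, Finsupp.linearCombination, Finsupp.sum] using this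
  have : ∏ i ∈ d.support, (c * x i) ^ d i
      = c ^ n * ∏ i ∈ d.support, x i ^ d i := by
    rw [← hdeg, ← Finset.prod_pow_eq_pow_sum, ← Finset.prod_mul_distrib]
    exact Finset.prod_congr rfl fun i _ => (mul_pow _ _ _)
  rw [this]; ring

lemma dvd_padicValInt_aux (p : ℕ) [Fact p.Prime] (n r : ℕ) (hn : 2 ≤ n)
    (F : MvPolynomial (Fin r) ℤ) (hhom : F.IsHomogeneous n)
    (haniso : ∀ x : Fin r → ℤ, (p : ℤ) ∣ MvPolynomial.eval x F → ∀ i, (p : ℤ) ∣ x i) :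
    ∀ k : ℕ, ∀ a : Fin r → ℤ, MvPolynomial.eval a F ≠ 0 →
      padicValInt p (MvPolynomial.eval a F) = k → n ∣ k := by
  intro k
  induction k using Nat.strong_induction_on with
  | _ k ih =>
    intro a ha hk
    by_cases hdvd : (p : ℤ) ∣ MvPolynomial.eval a F
    · have hall := haniso a hdvd
      set b : Fin r → ℤ := fun i => a i / p with hb
      have hab : ∀ i, a i = p * b i := fun i => (Int.mul_ediv_cancel' (hall i)).symm
      have haF : MvPolynomial.eval a F = (p : ℤ) ^ n * MvPolynomial.eval b F := by
        have : a = fun i => (p : ℤ) * b i := funext hab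
        rw [this, eval_mul_pow_aux hhom]
      have hbF : MvPolynomial.eval b F ≠ 0 := by
        intro h; rw [haF, h, mul_zero] at ha; exact ha rfl
      have hp1 : 1 < p := (Fact.out : p.Prime).one_lt
      have hval : padicValInt p (MvPolynomial.eval a F)
          = n + padicValInt p (MvPolynomial.eval b F) := by
        rw [haF, padicValInt.mul (pow_ne_zero _ (Int.natCast_ne_zero.mpr (by omega))) hbF]
        congr 1
        simp only [padicValInt, Int.natAbs_pow, Int.natAbs_natCast]
        exact padicValNat.prime_pow n
      set k' := padicValInt p (MvPolynomial.eval b F) with hk'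
      have hkk : k = n + k' := by rw [← hk, hval]
      have hlt : k' < k := by omega
      have hdk' := ih k' hlt b hbF rfl
      rw [hkk]
      exact Nat.dvd_add dvd_rfl hdk'
    · have : padicValInt p (MvPolynomial.eval a F) = 0 :=
        padicValInt.eq_zero_of_not_dvd hdvd
      rw [this] at hk
      simp [← hk]

theorem stmt_17 (p : ℕ) [Fact p.Prime] (n r : ℕ) (hn : 2 ≤ n)
    (F : MvPolynomial (Fin r) ℤ) (hhom : F.IsHomogeneous n)
    (hprim : ∀ d : ℤ, (∀ m ∈ F.support, d ∣ F.coeff m) → IsUnit d)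
    (haniso : ∀ x : Fin r → ℤ, (p : ℤ) ∣ MvPolynomial.eval x F → ∀ i, (p : ℤ) ∣ x i) :
    ¬ Dense {q : ℚ_[p] | ∃ x y : Fin r → ℤ,
      MvPolynomial.eval y F ≠ 0 ∧
      q = ((MvPolynomial.eval x F : ℤ) : ℚ_[p]) / ((MvPolynomial.eval y F : ℤ) : ℚ_[p])} := by
  intro hd
  have hp1 : 1 < p := (Fact.out : p.Prime).one_lt
  have hpnorm : ‖(p : ℚ_[p])‖ = (p : ℝ)⁻¹ := Padic.norm_p
  have hpos : (0 : ℝ) < ‖(p : ℚ_[p])‖ := by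
    rw [hpnorm]; positivity
  obtain ⟨z, hzb, x, y, hy, hz⟩ :=
    (Metric.dense_iff.mp hd) (p : ℚ_[p]) ‖(p : ℚ_[p])‖ hpos
  have hlt : ‖z - (p : ℚ_[p])‖ < ‖(p : ℚ_[p])‖ := by
    rw [← dist_eq_norm]; exact Metric.mem_ball.mp hzb
  -- ‖z‖ = ‖p‖
  have hnz : ‖z‖ = ‖(p : ℚ_[p])‖ := by
    have : z = (p : ℚ_[p]) + (z - (p : ℚ_[p])) := by ring
    rw [this]
    rcases eq_or_ne (z - (p : ℚ_[p])) 0 with h | h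
    · simp [h]
    · rw [Padic.add_eq_max_of_ne (by rw [hpnorm] at *; exact ne_of_gt hlt)]
      exact max_eq_left hlt.le
  have hzne : z ≠ 0 := by
    intro h; rw [h, norm_zero] at hnz; exact hpos.ne hnz
  -- z has valuation 1
  have hval1 : z.valuation = 1 := by
    have h1 : ‖z‖ = (p : ℝ) ^ (-z.valuation) := Padic.norm_eq_zpow_neg_valuation hzne
    have h2 : ‖(p : ℚ_[p])‖ = (p : ℝ) ^ (-(1:ℤ)) := by
      rw [hpnorm, zpow_neg, zpow_one]
    rw [h1, h2] at hnz
    have hp1R : (1 : ℝ) < (p : ℝ) := by exact_mod_cast hp1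
    have := (zpow_right_injective₀ (by positivity) hp1R.ne') hnz
    omega
  -- but valuation of z is divisible by n
  have hxne : MvPolynomial.eval x F ≠ 0 := by
    intro h
    rw [hz, h] at hzne
    simp at hzne
  have hxcast : ((MvPolynomial.eval x F : ℤ) : ℚ_[p]) ≠ 0 := by
    exact_mod_cast hxne
  have hycast : ((MvPolynomial.eval y F : ℤ) : ℚ_[p]) ≠ 0 := by
    exact_mod_cast hy
  have hvz : z.valuation =
      (padicValInt p (MvPolynomial.eval x F) : ℤ)
        - (padicValInt p (MvPolynomial.eval y F) : ℤ) := by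
    have hmul : z * ((MvPolynomial.eval y F : ℤ) : ℚ_[p])
        = ((MvPolynomial.eval x F : ℤ) : ℚ_[p]) := by
      rw [hz, div_mul_cancel₀ _ hycast]
    have := Padic.valuation_mul hzne hycast
    rw [hmul, Padic.valuation_intCast, Padic.valuation_intCast] at this
    omega
  have hdx : n ∣ padicValInt p (MvPolynomial.eval x F) :=
    dvd_padicValInt_aux p n r hn F hhom haniso _ x hxne rfl
  have hdy : n ∣ padicValInt p (MvPolynomial.eval y F) :=
    dvd_padicValInt_aux p n r hn F hhom haniso _ y hy rfl
  have : (n : ℤ) ∣ z.valuation := by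
    rw [hvz]
    exact dvd_sub (Int.natCast_dvd_natCast.mpr hdx) (Int.natCast_dvd_natCast.mpr hdy)
  rw [hval1] at this
  have := Int.le_of_dvd one_pos this
  omega
end
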